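/- arXiv:2401.06283 — 7 statements merged into one kernel-verified Lean document; each statement's English description precedes it below -/
import Mathlib

section
/- If H is a subset of a finite abelian group G of odd order such that for every x in G\H there exist distinct a,b in H with x = a+b divided by 2 (i.e. 2x = a+b), or x = 2a - b, then |H| ≥ sqrt(2|G|/3 + 1/36) + 1/6. -/
theorem stmt_0 {G : Type*} [AddCommGroup G] [Fintype G] [DecidableEq G]
    (hodd : Odd (Fintype.card G)) (H : Finset G)
    (hsat : ∀ x : G, x ∉ H → ∃ a ∈ H, ∃ b ∈ H, a ≠ b ∧
      ((2 : ℤ) • x = a + b ∨ x = (2 : ℤ) • a - b)) :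
    (H.card : ℝ) ≥ Real.sqrt (2 * (Fintype.card G : ℝ) / 3 + 1 / 36) + 1 / 6 := by
  classical
  set n := Fintype.card G with hn
  set k := H.card with hk
  -- doubling is injective
  have hdbl : ∀ x y : G, x + x = y + y → x = y := by
    intro x y h
    have h2 : (2 : ℕ) • (x - y) = 0 := by
      rw [two_nsmul, sub_add_sub_comm, h, sub_self]
    have d2 : addOrderOf (x - y) ∣ 2 := addOrderOf_dvd_of_nsmul_eq_zero h2
    have dn : addOrderOf (x - y) ∣ n := addOrderOf_dvd_card
    have dg : addOrderOf (x - y) ∣ Nat.gcd 2 n := Nat.dvd_gcd d2 dn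
    have hcop : Nat.gcd 2 n = 1 := Nat.coprime_two_left.mpr hodd
    rw [hcop, Nat.dvd_one, AddMonoid.addOrderOf_eq_one_iff, sub_eq_zero] at dg
    exact dg
  -- G is nonempty and H is nonempty
  have hnpos : 0 < n := by
    rcases hodd with ⟨m, hm⟩; omega
  have hk1 : 1 ≤ k := by
    by_contra hcon
    have hH : H = ∅ := by
      rw [← Finset.card_eq_zero]; omega
    have : Nonempty G := Fintype.card_pos_iff.mp hnpos
    obtain ⟨x⟩ := this
    obtain ⟨a, ha, -⟩ := hsat x (by simp [hH])
    simp [hH] at ha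
  -- choose witnesses
  have key : ∀ x : G, ∃ p : G × G, x ∉ H → p.1 ∈ H ∧ p.2 ∈ H ∧ p.1 ≠ p.2 ∧
      (x + x = p.1 + p.2 ∨ x = p.1 + p.1 - p.2) := by
    intro x
    by_cases hx : x ∈ H
    · exact ⟨(0, 0), fun h => absurd hx h⟩
    · obtain ⟨a, ha, b, hb, hab, hc⟩ := hsat x hx
      refine ⟨(a, b), fun _ => ⟨ha, hb, hab, ?_⟩⟩
      rcases hc with h | h
      · left; rw [two_zsmul] at h; exact h
      · right; rw [two_zsmul] at h; exact h
  choose w hw using key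
  set S : Finset G := Finset.univ \ H with hS
  have hmemS : ∀ x, x ∈ S ↔ x ∉ H := by
    intro x; simp [hS]
  set S₁ : Finset G := S.filter (fun x => x + x = (w x).1 + (w x).2) with hS₁
  set S₂ : Finset G := S.filter (fun x => ¬ (x + x = (w x).1 + (w x).2)) with hS₂
  -- Claim A
  have claimA : (S₁ ×ˢ (Finset.univ : Finset Bool)).card ≤ H.offDiag.card := by
    apply Finset.card_le_card_of_injOn
      (fun p => if p.2 then ((w p.1).1, (w p.1).2) else ((w p.1).2, (w p.1).1))
    · rintro ⟨x, i⟩ hp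
      rw [Finset.mem_coe, Finset.mem_product] at hp
      have hx : x ∈ S := Finset.mem_of_mem_filter _ hp.1
      obtain ⟨ha, hb, hab, -⟩ := hw x ((hmemS x).mp hx)
      rcases i with _ | _ <;> simp [Finset.mem_offDiag, ha, hb, hab, Ne.symm hab]
    · rintro ⟨x, i⟩ hp ⟨y, j⟩ hq heq
      rw [Finset.mem_coe, Finset.mem_product] at hp hq
      have hx : x + x = (w x).1 + (w x).2 := (Finset.mem_filter.mp hp.1).2
      have hy : y + y = (w y).1 + (w y).2 := (Finset.mem_filter.mp hq.1).2
      have hxS := (hmemS x).mp (Finset.mem_of_mem_filter _ hp.1)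
      obtain ⟨-, -, hab, -⟩ := hw x hxS
      have hsum : (w x).1 + (w x).2 = (w y).1 + (w y).2 := by
        rcases i with _ | _ <;> rcases j with _ | _ <;>
          simp only [if_true, if_false, Bool.false_eq_true, ite_false, ite_true] at heq <;>
          rw [Prod.mk.injEq] at heq <;>
          rw [heq.1, heq.2] <;> abel
      have hxy : x = y := hdbl x y (by rw [hx, hsum, ← hy])
      subst hxy
      rcases i with _ | _ <;> rcases j with _ | _ <;>
        simp only [if_true, if_false, Bool.false_eq_true, ite_false, ite_true] at heq ⊢ <;>
        first
          | rfl
          | (exfalso; rw [Prod.mk.injEq] at heq; exact hab heq.1.symm)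
          | (exfalso; rw [Prod.mk.injEq] at heq; exact hab heq.1)
  -- Claim B
  have claimB : S₂.card ≤ H.offDiag.card := by
    apply Finset.card_le_card_of_injOn (fun x => ((w x).1, (w x).2))
    · intro x hx
      obtain ⟨ha, hb, hab, -⟩ := hw x ((hmemS x).mp (Finset.mem_of_mem_filter _ hx))
      simp [Finset.mem_offDiag, ha, hb, hab]
    · intro x hx y hy heq
      have hxm := Finset.mem_filter.mp hx
      have hym := Finset.mem_filter.mp hy
      obtain ⟨-, -, -, hcx⟩ := hw x ((hmemS x).mp hxm.1)
      obtain ⟨-, -, -, hcy⟩ := hw y ((hmemS y).mp hym.1)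
      have h1 : x = (w x).1 + (w x).1 - (w x).2 := hcx.resolve_left hxm.2
      have h2 : y = (w y).1 + (w y).1 - (w y).2 := hcy.resolve_left hym.2
      rw [Prod.mk.injEq] at heq
      rw [h1, h2, heq.1, heq.2]
  -- counting
  have hScard : S.card + k = n := by
    rw [hS, Finset.card_sdiff_of_subset (Finset.subset_univ H), Finset.card_univ, ← hn, ← hk]
    have : k ≤ n := by rw [hk, hn, ← Finset.card_univ]; exact Finset.card_le_univ H
    omega
  have hsplit : S₁.card + S₂.card = S.card := Finset.card_filter_add_card_filter_not _
  have hprod : (S₁ ×ˢ (Finset.univ : Finset Bool)).card = S₁.card * 2 := by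
    rw [Finset.card_product, Finset.card_univ, Fintype.card_bool]
  have hoff : H.offDiag.card = k * k - k := by
    rw [Finset.offDiag_card, ← hk]
  have hkk : k ≤ k * k := Nat.le_mul_of_pos_left k (by omega)
  have hmain : 2 * n + k ≤ 3 * (k * k) := by
    rw [hprod, hoff] at claimA
    rw [hoff] at claimB
    omega
  -- real arithmetic
  have hmainR : 2 * (n : ℝ) + (k : ℝ) ≤ 3 * (k : ℝ) ^ 2 := by
    have := (Nat.cast_le (α := ℝ)).mpr hmain
    push_cast at this
    nlinarith [this]
  have hk1R : (1 : ℝ) ≤ (k : ℝ) := by exact_mod_cast hk1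
  have hsqrt : Real.sqrt (2 * (n : ℝ) / 3 + 1 / 36) ≤ (k : ℝ) - 1 / 6 := by
    rw [show ((k : ℝ) - 1 / 6) = Real.sqrt (((k : ℝ) - 1 / 6) ^ 2) from
      (Real.sqrt_sq (by linarith)).symm]
    apply Real.sqrt_le_sqrt
    nlinarith
  linarith
end

section
/- Let G, G' be abelian groups and H ⊆ G, H' ⊆ G' be (2,−1)-saturating sets. Then H × H' is (2,−1)-saturating in G × G'. -/
theorem stmt_7 {G G' : Type*} [AddCommGroup G] [AddCommGroup G']
    (H : Set G) (H' : Set G')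
    (hH : ∀ x : G, x ∉ H → ∃ h ∈ H, ∃ h' ∈ H, h ≠ h' ∧ x = (2 : ℤ) • h - h')
    (hH' : ∀ x : G', x ∉ H' → ∃ h ∈ H', ∃ h' ∈ H', h ≠ h' ∧ x = (2 : ℤ) • h - h') :
    ∀ x : G × G', x ∉ H ×ˢ H' →
      ∃ h ∈ H ×ˢ H', ∃ h' ∈ H ×ˢ H', h ≠ h' ∧ x = (2 : ℤ) • h - h' := by
  rintro ⟨x, y⟩ hx
  rw [Set.mem_prod] at hx
  push_neg at hx
  by_cases hxH : x ∈ H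
  · have hyH := hx hxH
    obtain ⟨a, ha, b, hb, hab, heq⟩ := hH' y hyH
    refine ⟨(x, a), ⟨hxH, ha⟩, (x, b), ⟨hxH, hb⟩, ?_, ?_⟩
    · simp [Prod.ext_iff, hab]
    · simp [Prod.ext_iff, heq, two_smul]
  · obtain ⟨a, ha, b, hb, hab, heq⟩ := hH x hxH
    by_cases hyH : y ∈ H'
    · refine ⟨(a, y), ⟨ha, hyH⟩, (b, y), ⟨hb, hyH⟩, ?_, ?_⟩
      · simp [Prod.ext_iff, hab]
      · simp [Prod.ext_iff, heq, two_smul]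
    · obtain ⟨c, hc, d, hd, hcd, heq'⟩ := hH' y hyH
      refine ⟨(a, c), ⟨ha, hc⟩, (b, d), ⟨hb, hd⟩, ?_, ?_⟩
      · simp [Prod.ext_iff, hab]
      · simp [Prod.ext_iff, heq, heq', two_smul]
end

section
/- Let q be an odd prime power such that −2 is not a square in F_q. Then the parabola P = {(x, x²) : x ∈ F_q} ⊆ F_q × F_q is a complete 3-AP free set: P is 3-AP free, and for every (a,b) with b ≠ a², adding (a,b) to P creates a 3-term arithmetic progression. -/
open FiniteField

private lemma aux_sq_mul {F : Type*} [Field F] [Fintype F] {x y : F}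
    (hx : ¬ IsSquare x) (hy : ¬ IsSquare y) : IsSquare (x * y) := by
  classical
  have hx0 : x ≠ 0 := fun h => hx (h ▸ ⟨0, by ring⟩)
  have hy0 : y ≠ 0 := fun h => hy (h ▸ ⟨0, by ring⟩)
  have h1 : quadraticChar F x = -1 := (quadraticChar_neg_one_iff_not_isSquare).2 hx
  have h2 : quadraticChar F y = -1 := (quadraticChar_neg_one_iff_not_isSquare).2 hy
  have : quadraticChar F (x * y) = 1 := by rw [map_mul, h1, h2]; ring
  exact (quadraticChar_one_iff_isSquare (mul_ne_zero hx0 hy0)).1 this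

theorem stmt_10 {F : Type*} [Field F] [Fintype F] (hodd : Odd (Fintype.card F))
    (hns : ¬ ∃ y : F, y ^ 2 = -2) :
    let P : Set (F × F) := {p | ∃ x : F, p = (x, x ^ 2)}
    (¬ ∃ u ∈ P, ∃ v ∈ P, ∃ w ∈ P, u ≠ v ∧ v ≠ w ∧ u ≠ w ∧ u + w = (2 : F) • v) ∧
    (∀ a b : F, b ≠ a ^ 2 → ∃ u ∈ P, ∃ v ∈ P, u ≠ v ∧
      ((2 : F) • ((a, b) : F × F) = u + v ∨ (2 : F) • u = (a, b) + v ∨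
        (2 : F) • v = (a, b) + u)) := by
  intro P
  have hchar : ringChar F ≠ 2 := by
    intro h
    have h2 := FiniteField.even_card_of_char_two h
    rw [Nat.odd_iff] at hodd
    omega
  have h2 : (2 : F) ≠ 0 := Ring.two_ne_zero hchar
  constructor
  · rintro ⟨u, ⟨x, rfl⟩, v, ⟨y, rfl⟩, w, ⟨z, rfl⟩, huv, hvw, huw, hsum⟩
    have h1 : x + z = 2 * y := congrArg Prod.fst hsum
    have h2' : x ^ 2 + z ^ 2 = 2 * y ^ 2 := congrArg Prod.snd hsum
    have hxz : (x - z) ^ 2 = 0 := by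
      have : 2 * (x ^ 2 + z ^ 2) - (x + z) ^ 2 = (x - z) ^ 2 := by ring
      rw [← this, h1, h2']; ring
    have : x = z := by
      have := pow_eq_zero_iff (n := 2) (by norm_num) |>.1 hxz
      exact sub_eq_zero.1 this
    exact huw (by rw [this])
  · intro a b hb
    by_cases hsq : IsSquare (b - a ^ 2)
    · obtain ⟨s, hs⟩ := hsq
      have hs0 : s ≠ 0 := by
        intro h; apply hb; rw [h, mul_zero] at hs
        exact sub_eq_zero.1 hs
      refine ⟨(a + s, (a + s) ^ 2), ⟨a + s, rfl⟩, (a - s, (a - s) ^ 2), ⟨a - s, rfl⟩, ?_, ?_⟩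
      · intro h
        have : a + s = a - s := congrArg Prod.fst h
        have h2s : 2 * s = 0 := by linear_combination this
        exact hs0 ((mul_eq_zero.1 h2s).resolve_left h2)
      · left
        simp only [Prod.smul_mk, Prod.mk_add_mk, smul_eq_mul, Prod.ext_iff]
        exact ⟨by ring, by linear_combination 2 * hs⟩
    · -- 2(a^2 - b) is a square
      have hns2 : ¬ IsSquare (-2 : F) := by
        intro ⟨r, hr⟩; exact hns ⟨r, by rw [sq]; exact hr.symm⟩
      have : IsSquare ((-2 : F) * (b - a ^ 2)) := aux_sq_mul hns2 hsq
      obtain ⟨s, hs⟩ := this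
      -- s * s = -2 * (b - a^2) = 2 * (a^2 - b)
      -- t^2 = s^2/4 = (a^2-b)/2. Want 2*t^2 = a^2 - b.
      set t : F := s / 2 with ht
      have h2t : 2 * (t * t) = a ^ 2 - b := by
        rw [ht]
        field_simp
        linear_combination -hs
      have ht0 : t ≠ 0 := by
        intro h; apply hb; rw [h, mul_zero, mul_zero] at h2t
        linear_combination h2t
      refine ⟨(a + 2 * t, (a + 2 * t) ^ 2), ⟨a + 2 * t, rfl⟩,
        (a + t, (a + t) ^ 2), ⟨a + t, rfl⟩, ?_, ?_⟩
      · intro h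
        have : a + 2 * t = a + t := congrArg Prod.fst h
        apply ht0; linear_combination this
      · right; right
        simp only [Prod.smul_mk, Prod.mk_add_mk, smul_eq_mul, Prod.ext_iff]
        exact ⟨by ring, by linear_combination -h2t⟩
end

section
/- If p ≡ 5 or 7 (mod 8) is an odd prime and k ≥ 1, then there exists a complete 3-AP free subset of F_p^{4k−2} of size at most p^{2k−1}, hence sqrt(2/3)·p^{2k−1} < a(3-AP, F_p^{4k−2}) ≤ p^{2k−1}. -/
/-- A finset is 3-AP free (no three pairwise distinct elements in arithmetic progression). -/
def ThreeAPFreeSet {G : Type*} [AddCommGroup G] (S : Finset G) : Prop :=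
  ¬ ∃ a ∈ S, ∃ b ∈ S, ∃ c ∈ S, a ≠ b ∧ b ≠ c ∧ a ≠ c ∧ a + c = (2 : ℤ) • b

open Finset

lemma threeAPFree_subset {G : Type*} [AddCommGroup G] {S T : Finset G}
    (h : ThreeAPFreeSet T) (hs : S ⊆ T) : ThreeAPFreeSet S := by
  rintro ⟨a, ha, b, hb, c, hc, h1, h2, h3, h4⟩
  exact h ⟨a, hs ha, b, hs hb, c, hs hc, h1, h2, h3, h4⟩

lemma maximal_of_saturated {G : Type*} [AddCommGroup G] [DecidableEq G] {S : Finset G}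
    (hsat : ∀ g ∉ S, ¬ ThreeAPFreeSet (insert g S)) :
    ∀ T : Finset G, ThreeAPFreeSet T → S ⊆ T → T = S := by
  intro T hT hST
  refine Finset.Subset.antisymm (fun g hg => ?_) hST
  by_contra hgS
  exact hsat g hgS (threeAPFree_subset hT (insert_subset hg hST))

section Euler

variable {F : Type*} [Field F] [Fintype F]

lemma pow_card_div_two_eq_neg_one (hF : ringChar F ≠ 2) {a : F} (ha : a ≠ 0)
    (h : ¬ IsSquare a) : a ^ (Fintype.card F / 2) = -1 := by
  have hodd : Fintype.card F % 2 = 1 := FiniteField.odd_card_of_char_ne_two hF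
  have hsq : a ^ (Fintype.card F / 2) * a ^ (Fintype.card F / 2) = 1 := by
    rw [← pow_add]
    have : Fintype.card F / 2 + Fintype.card F / 2 = Fintype.card F - 1 := by omega
    rw [this]
    exact FiniteField.pow_card_sub_one_eq_one a ha
  rcases mul_self_eq_one_iff.mp hsq with h1 | h1
  · exact absurd ((FiniteField.isSquare_iff hF ha).mpr h1) h
  · exact h1

lemma isSquare_of_nonsquares (hF : ringChar F ≠ 2) {a b : F} (ha : a ≠ 0) (hb : b ≠ 0)
    (hA : ¬ IsSquare a) (hB : ¬ IsSquare b) : IsSquare (a * b) := by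
  refine (FiniteField.isSquare_iff hF (mul_ne_zero ha hb)).mpr ?_
  rw [mul_pow, pow_card_div_two_eq_neg_one hF ha hA, pow_card_div_two_eq_neg_one hF hb hB]
  ring

end Euler

section Lift

lemma sum_pow_odd {p n : ℕ} (hp : p % 2 = 1) (hn : n % 2 = 1) :
    (∑ i ∈ range n, p ^ i) % 2 = 1 := by
  rw [Finset.sum_nat_mod]
  have : ∀ i ∈ range n, p ^ i % 2 = 1 % 2 := by
    intro i _
    rw [Nat.pow_mod, hp]; simp
  rw [Finset.sum_congr rfl this, Finset.sum_const, card_range, smul_eq_mul, Nat.mul_mod, hn]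

lemma geom_sum_nat (p n : ℕ) (hp : 1 ≤ p) :
    (p - 1) * (∑ i ∈ range n, p ^ i) = p ^ n - 1 := by
  have h := geom_sum_mul (p : ℤ) n
  have h1 : (1:ℕ) ≤ p ^ n := Nat.one_le_pow _ _ hp
  zify [hp, h1]
  push_cast at h ⊢
  linarith

lemma nonsquare_lift (p n : ℕ) [Fact p.Prime] (hp2 : p % 2 = 1) (hn : n % 2 = 1)
    {a : ZMod p} (ha : a ≠ 0) (hA : ¬ IsSquare a) :
    ¬ IsSquare (algebraMap (ZMod p) (GaloisField p n) a) := by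
  have hpp : p.Prime := Fact.out
  haveI : Fintype (GaloisField p n) := Fintype.ofFinite _
  have hchar : ringChar (GaloisField p n) = p := ringChar.eq _ p
  have hchar2 : ringChar (GaloisField p n) ≠ 2 := by rw [hchar]; omega
  have hcharZ : ringChar (ZMod p) ≠ 2 := by rw [ZMod.ringChar_zmod_n]; omega
  have hinj : Function.Injective (algebraMap (ZMod p) (GaloisField p n)) :=
    RingHom.injective _
  have hα : algebraMap (ZMod p) (GaloisField p n) a ≠ 0 := by
    simp only [ne_eq, map_eq_zero_iff _ hinj]; exact ha
  intro hsq
  have heuler := (FiniteField.isSquare_iff hchar2 hα).mp hsq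
  -- compute the power
  have hcard : Fintype.card (GaloisField p n) = p ^ n := by
    rw [← Nat.card_eq_fintype_card, GaloisField.card p n (by omega)]
  have hZcard : Fintype.card (ZMod p) = p := ZMod.card p
  have haZ : a ^ (p / 2) = -1 := by
    have := pow_card_div_two_eq_neg_one hcharZ ha hA
    rwa [hZcard] at this
  set t := ∑ i ∈ range n, p ^ i with ht
  have htodd : t % 2 = 1 := sum_pow_odd hp2 hn
  have hexp : Fintype.card (GaloisField p n) / 2 = p / 2 * t := by
    rw [hcard]
    have h1 : (p - 1) * t = p ^ n - 1 := geom_sum_nat p n hpp.one_le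
    have h2 : p ^ n % 2 = 1 := by rw [Nat.pow_mod, hp2]; simp
    have h3 : p / 2 = (p - 1) / 2 := by omega
    obtain ⟨q, hq⟩ : 2 ∣ (p - 1) := by omega
    have h6 : p ^ n - 1 = 2 * (q * t) := by rw [← h1, hq]; ring
    have h7 : p / 2 = q := by omega
    rw [h7]
    generalize hx : q * t = x at h6 ⊢
    omega
  rw [hexp, pow_mul, ← map_pow, haZ] at heuler
  rw [map_neg, map_one] at heuler
  have : ((-1 : GaloisField p n)) ^ t = -1 := Odd.neg_one_pow (Nat.odd_iff.mpr htodd)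
  rw [this] at heuler
  exact Ring.neg_one_ne_one_of_char_ne_two hchar2 heuler

end Lift

section Parab

variable (F : Type*) [Field F] [Fintype F] [DecidableEq F]

def parab : Finset (F × F) := Finset.univ.image fun x => (x, x ^ 2)

variable {F}

lemma mem_parab {g : F × F} : g ∈ parab F ↔ g.2 = g.1 ^ 2 := by
  constructor
  · rintro hg
    simp only [parab, mem_image, mem_univ, true_and] at hg
    obtain ⟨x, hx⟩ := hg
    rw [← hx]
  · intro h
    simp only [parab, mem_image, mem_univ, true_and]
    exact ⟨g.1, by rw [← h]⟩

lemma parab_card : (parab F).card = Fintype.card F := by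
  rw [parab, Finset.card_image_of_injective _ (fun x y hxy => (Prod.mk.injEq _ _ _ _ ▸ hxy).1),
    Finset.card_univ]

lemma parab_free (hF : ringChar F ≠ 2) : ThreeAPFreeSet (parab F) := by
  rintro ⟨a, ha, b, hb, c, hc, hab, hbc, hac, hap⟩
  rw [mem_parab] at ha hb hc
  rw [two_zsmul, Prod.ext_iff] at hap
  obtain ⟨h1, h2⟩ := hap
  simp only [Prod.fst_add, Prod.snd_add] at h1 h2
  rw [ha, hb, hc] at h2
  have hkey : (a.1 - c.1) ^ 2 = 0 := by linear_combination 2 * h2 - (a.1 + c.1 + b.1 + b.1) * h1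
  have h3 : a.1 = c.1 :=
    sub_eq_zero.mp (pow_eq_zero_iff (n := 2) (by norm_num) |>.mp hkey)
  exact hac (Prod.ext_iff.mpr ⟨h3, by rw [ha, hc, h3]⟩)

end Parab

section Sat

variable {F : Type*} [Field F] [Fintype F] [DecidableEq F]

lemma parab_saturated (hF : ringChar F ≠ 2) (hns : ¬ IsSquare (-2 : F))
    {g : F × F} (hg : g ∉ parab F) : ¬ ThreeAPFreeSet (insert g (parab F)) := by
  have h2 : (2 : F) ≠ 0 := Ring.two_ne_zero hF
  obtain ⟨u, v⟩ := g
  rw [mem_parab] at hg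
  simp only at hg
  have hd : v - u ^ 2 ≠ 0 := sub_ne_zero.mpr hg
  intro hfree
  by_cases hsq : IsSquare (v - u ^ 2)
  · -- midpoint case
    obtain ⟨t, ht⟩ := hsq
    have htne : t ≠ 0 := by rintro rfl; rw [mul_zero] at ht; exact hd ht
    refine hfree ⟨(u + t, (u + t) ^ 2), ?_, (u, v), ?_, (u - t, (u - t) ^ 2), ?_, ?_, ?_, ?_, ?_⟩
    · exact mem_insert_of_mem (mem_parab.mpr rfl)
    · exact mem_insert_self _ _
    · exact mem_insert_of_mem (mem_parab.mpr rfl)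
    · intro h; rw [Prod.mk.injEq] at h
      exact hg (by rw [← h.2, h.1])
    · intro h; rw [Prod.mk.injEq] at h
      exact hg (by rw [h.2, ← h.1])
    · intro h; rw [Prod.mk.injEq] at h
      have h4 : (2 : F) * t = 0 := by linear_combination h.1
      rcases mul_eq_zero.mp h4 with h5 | h5
      · exact h2 h5
      · exact htne h5
    · rw [two_zsmul, Prod.ext_iff]
      refine ⟨by simp only [Prod.fst_add]; ring, ?_⟩
      simp only [Prod.snd_add]
      linear_combination (-2 : F) * ht
  · -- endpoint case
    have hsq2 : IsSquare ((-2) * (v - u ^ 2)) :=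
      isSquare_of_nonsquares hF (by simpa using h2) hd hns hsq
    obtain ⟨s, hs⟩ := hsq2
    have hsne : s ≠ 0 := by
      rintro rfl; rw [mul_zero] at hs
      exact mul_ne_zero (by simpa using h2) hd hs
    set w := s / 2 with hw
    have hws : w + w = s := by
      rw [hw, ← add_div, ← two_mul, mul_div_cancel_left₀ _ h2]
    have hs' : (-2 : F) * (v - u ^ 2) = (w + w) * (w + w) := by rw [hws]; exact hs
    have hwne : w ≠ 0 := by rintro h0; exact hsne (by rw [← hws, h0, add_zero])
    refine hfree ⟨(u, v), ?_, (u + w, (u + w) ^ 2), ?_,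
      (u + w + w, (u + w + w) ^ 2), ?_, ?_, ?_, ?_, ?_⟩
    · exact mem_insert_self _ _
    · exact mem_insert_of_mem (mem_parab.mpr rfl)
    · exact mem_insert_of_mem (mem_parab.mpr rfl)
    · intro h; rw [Prod.mk.injEq] at h
      exact hg (by rw [h.2, ← h.1])
    · intro h; rw [Prod.mk.injEq] at h
      exact hwne (by linear_combination - h.1)
    · intro h; rw [Prod.mk.injEq] at h
      exact hg (by rw [h.2, ← h.1])
    · rw [two_zsmul, Prod.ext_iff]
      refine ⟨by simp only [Prod.fst_add]; ring, ?_⟩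
      simp only [Prod.snd_add]
      have key : (-2 : F) * (v + (u + w + w) ^ 2 - ((u + w) ^ 2 + (u + w) ^ 2)) = 0 := by
        linear_combination hs'
      rcases mul_eq_zero.mp key with h5 | h5
      · exact absurd h5 (by simpa using h2)
      · exact sub_eq_zero.mp h5

end Sat

section Transport

variable {G H : Type*} [AddCommGroup G] [AddCommGroup H] [DecidableEq G] [DecidableEq H]

lemma apFree_image (e : G ≃+ H) {S : Finset G} (h : ThreeAPFreeSet S) :
    ThreeAPFreeSet (S.image e) := by
  rintro ⟨a, ha, b, hb, c, hc, hab, hbc, hac, hap⟩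
  rw [mem_image] at ha hb hc
  obtain ⟨a', ha', rfl⟩ := ha
  obtain ⟨b', hb', rfl⟩ := hb
  obtain ⟨c', hc', rfl⟩ := hc
  refine h ⟨a', ha', b', hb', c', hc', ?_, ?_, ?_, ?_⟩
  · exact fun hh => hab (by rw [hh])
  · exact fun hh => hbc (by rw [hh])
  · exact fun hh => hac (by rw [hh])
  · apply e.injective
    rw [map_add, map_zsmul, hap]

lemma not_apFree_image (e : G ≃+ H) {S : Finset G} (h : ¬ ThreeAPFreeSet S) :
    ¬ ThreeAPFreeSet (S.image e) := by
  intro h'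
  apply h
  have := apFree_image e.symm h'
  rwa [Finset.image_image, show (⇑e.symm ∘ ⇑e) = id from funext (fun x => e.symm_apply_apply x),
    Finset.image_id] at this

end Transport

section Count

variable {G : Type*} [AddCommGroup G] [Fintype G] [DecidableEq G]

lemma lower_bound (hhalf : ∀ g : G, ∃ h : G, h + h = g)
    (hinj : ∀ x y : G, x + x = y + y → x = y)
    {T : Finset G} (hT : ThreeAPFreeSet T)
    (hmax : ∀ T' : Finset G, ThreeAPFreeSet T' → T ⊆ T' → T' = T) :
    2 * Fintype.card G < 3 * T.card ^ 2 := by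
  classical
  -- T is nonempty
  have hne : 1 ≤ T.card := by
    rcases Finset.eq_empty_or_nonempty T with rfl | h
    · exfalso
      have h0 : ThreeAPFreeSet ({0} : Finset G) := by
        rintro ⟨a, ha, b, hb, c, hc, hab, _, _, _⟩
        simp only [mem_singleton] at ha hb
        exact hab (ha.trans hb.symm)
      have := hmax {0} h0 (Finset.empty_subset _)
      simp at this
    · exact Finset.card_pos.mpr h
  set half : G → G := fun g => (hhalf g).choose with hhalfdef
  have half_spec : ∀ g : G, half g + half g = g := fun g => (hhalf g).choose_spec
  set f : G × G → G := fun x => x.1 + x.1 - x.2 with hf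
  set hfun : G × G → G := fun x => half (x.1 + x.2) with hfn
  -- covering
  have hcover : (Finset.univ : Finset G) ⊆
      T ∪ T.offDiag.image f ∪ T.offDiag.image hfun := by
    intro g _
    by_cases hgT : g ∈ T
    · exact mem_union_left _ (mem_union_left _ hgT)
    · have hnotfree : ¬ ThreeAPFreeSet (insert g T) := by
        intro hfree
        exact hgT ((hmax _ hfree (Finset.subset_insert _ _)) ▸ mem_insert_self g T)
      rw [ThreeAPFreeSet, not_not] at hnotfree
      obtain ⟨a, ha, b, hb, c, hc, hab, hbc, hac, hap⟩ := hnotfree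
      rw [two_zsmul] at hap
      rw [mem_insert] at ha hb hc
      rcases ha with rfl | haT
      · -- a = g : g = 2b - c
        have hbT : b ∈ T := hb.resolve_left (fun hh => hab hh.symm)
        have hcT : c ∈ T := hc.resolve_left (fun hh => hac hh.symm)
        refine mem_union_left _ (mem_union_right _ ?_)
        rw [mem_image]
        exact ⟨(b, c), Finset.mem_offDiag.mpr ⟨hbT, hcT, hbc⟩, by
          simp only [hf]; rw [sub_eq_iff_eq_add, ← hap]⟩
      rcases hb with rfl | hbT
      · -- b = g : g = half (a + c)
        have hcT : c ∈ T := hc.resolve_left (fun hh => hbc hh.symm)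
        refine mem_union_right _ ?_
        rw [mem_image]
        refine ⟨(a, c), Finset.mem_offDiag.mpr ⟨haT, hcT, hac⟩, ?_⟩
        simp only [hfn]
        apply hinj
        rw [half_spec, hap]
      rcases hc with rfl | hcT
      · -- c = g : g = 2b - a
        refine mem_union_left _ (mem_union_right _ ?_)
        rw [mem_image]
        exact ⟨(b, a), Finset.mem_offDiag.mpr ⟨hbT, haT, fun hh => hab hh.symm⟩, by
          simp only [hf]; rw [sub_eq_iff_eq_add, ← hap]; exact add_comm a c⟩
      · exact absurd ⟨a, haT, b, hbT, c, hcT, hab, hbc, hac, by rw [two_zsmul]; exact hap⟩ hT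
  -- counting
  have h1 : Fintype.card G ≤ T.card + (T.offDiag.image f).card + (T.offDiag.image hfun).card := by
    calc Fintype.card G = (Finset.univ : Finset G).card := (Finset.card_univ).symm
    _ ≤ (T ∪ T.offDiag.image f ∪ T.offDiag.image hfun).card := Finset.card_le_card hcover
    _ ≤ (T ∪ T.offDiag.image f).card + (T.offDiag.image hfun).card := Finset.card_union_le _ _
    _ ≤ T.card + (T.offDiag.image f).card + (T.offDiag.image hfun).card := by
        have := Finset.card_union_le T (T.offDiag.image f)
        omega
  have h2 : (T.offDiag.image f).card ≤ T.card * T.card - T.card := by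
    calc (T.offDiag.image f).card ≤ T.offDiag.card := Finset.card_image_le
    _ = T.card * T.card - T.card := Finset.offDiag_card _
  have h3 : 2 * (T.offDiag.image hfun).card ≤ T.card * T.card - T.card := by
    calc 2 * (T.offDiag.image hfun).card ≤ T.offDiag.card := by
          apply Finset.mul_card_image_le_card
          intro b hb
          rw [mem_image] at hb
          obtain ⟨⟨x, y⟩, hxy, hfxy⟩ := hb
          have hyx : (y, x) ∈ T.offDiag := by
            rw [Finset.mem_offDiag] at hxy ⊢
            exact ⟨hxy.2.1, hxy.1, fun hh => hxy.2.2 hh.symm⟩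
          have hfyx : hfun (y, x) = b := by
            simp only [hfn] at hfxy ⊢
            rwa [add_comm]
          have hsub : ({(x, y), (y, x)} : Finset (G × G)) ⊆
              T.offDiag.filter (fun a => hfun a = b) := by
            intro z hz
            rw [Finset.mem_insert, Finset.mem_singleton] at hz
            rcases hz with rfl | rfl
            · exact Finset.mem_filter.mpr ⟨hxy, hfxy⟩
            · exact Finset.mem_filter.mpr ⟨hyx, hfyx⟩
          have hcard2 : ({(x, y), (y, x)} : Finset (G × G)).card = 2 := by
            rw [Finset.card_insert_of_notMem, Finset.card_singleton]
            rw [Finset.mem_singleton]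
            intro hh
            rw [Prod.mk.injEq] at hh
            exact (Finset.mem_offDiag.mp hxy).2.2 hh.1
          calc 2 = ({(x, y), (y, x)} : Finset (G × G)).card := hcard2.symm
          _ ≤ _ := Finset.card_le_card hsub
    _ = T.card * T.card - T.card := Finset.offDiag_card _
  have hsq : T.card ^ 2 = T.card * T.card := sq T.card
  have hle : T.card ≤ T.card * T.card := Nat.le_mul_of_pos_left _ hne
  omega

end Count

theorem stmt_12 (p : ℕ) (hp : p.Prime) (hodd : Odd p)
    (hmod : p % 8 = 5 ∨ p % 8 = 7) (k : ℕ) (hk : 1 ≤ k) :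
    (∃ S : Finset (Fin (4 * k - 2) → ZMod p), ThreeAPFreeSet S ∧
      (∀ T : Finset (Fin (4 * k - 2) → ZMod p), ThreeAPFreeSet T → S ⊆ T → T = S) ∧
      S.card ≤ p ^ (2 * k - 1)) ∧
    (∀ T : Finset (Fin (4 * k - 2) → ZMod p), ThreeAPFreeSet T →
      (∀ T' : Finset (Fin (4 * k - 2) → ZMod p), ThreeAPFreeSet T' → T ⊆ T' → T' = T) →
      Real.sqrt (2 / 3) * (p : ℝ) ^ (2 * k - 1) < T.card) := by
  haveI : Fact p.Prime := ⟨hp⟩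
  have hp2 : p % 2 = 1 := Nat.odd_iff.mp hodd
  set F := GaloisField p (2 * k - 1) with hFdef
  haveI : Fintype F := Fintype.ofFinite _
  haveI : DecidableEq F := Classical.decEq _
  have hnodd : (2 * k - 1) % 2 = 1 := by omega
  have hchar : ringChar F = p := ringChar.eq _ p
  have hcharne2 : ringChar F ≠ 2 := by rw [hchar]; omega
  have h2Z : (2 : ZMod p) ≠ 0 :=
    Ring.two_ne_zero (by rw [ZMod.ringChar_zmod_n]; omega)
  have hnsZ : ¬ IsSquare (-2 : ZMod p) := by
    rw [ZMod.exists_sq_eq_neg_two_iff (by omega : p ≠ 2)]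
    omega
  have hne0 : (-2 : ZMod p) ≠ 0 := neg_ne_zero.mpr h2Z
  have hnsF : ¬ IsSquare (-2 : F) := by
    have hlift := nonsquare_lift p (2 * k - 1) hp2 hnodd hne0 hnsZ
    have hmap : (algebraMap (ZMod p) F) (-2 : ZMod p) = (-2 : F) := by
      rw [show (-2 : ZMod p) = -(1 + 1) by norm_num, map_neg, map_add, map_one,
        one_add_one_eq_two]
    rwa [hmap] at hlift
  have hfr : Module.finrank (ZMod p) (F × F) =
      Module.finrank (ZMod p) (Fin (4 * k - 2) → ZMod p) := by
    rw [Module.finrank_prod, GaloisField.finrank p (by omega : 2 * k - 1 ≠ 0),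
      Module.finrank_pi, Fintype.card_fin]
    omega
  let e : (F × F) ≃+ (Fin (4 * k - 2) → ZMod p) :=
    (LinearEquiv.ofFinrankEq _ _ hfr).toAddEquiv
  constructor
  · refine ⟨(parab F).image e, apFree_image e (parab_free hcharne2), ?_, ?_⟩
    · apply maximal_of_saturated
      intro g hgS
      have hgp : e.symm g ∉ parab F := by
        intro hmem
        exact hgS (Finset.mem_image.mpr ⟨_, hmem, e.apply_symm_apply g⟩)
      have hsat := parab_saturated hcharne2 hnsF hgp
      have h2 := not_apFree_image e hsat
      rwa [Finset.image_insert, e.apply_symm_apply] at h2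
    · rw [Finset.card_image_of_injective _ e.injective, parab_card,
        ← Nat.card_eq_fintype_card, GaloisField.card p _ (by omega : 2 * k - 1 ≠ 0)]
  · intro T hT hmax
    have hhalf : ∀ g : Fin (4 * k - 2) → ZMod p, ∃ h, h + h = g := by
      intro g
      refine ⟨fun i => (2 : ZMod p)⁻¹ * g i, funext fun i => ?_⟩
      show (2 : ZMod p)⁻¹ * g i + (2 : ZMod p)⁻¹ * g i = g i
      have : (2 : ZMod p)⁻¹ * g i + (2 : ZMod p)⁻¹ * g i = ((2 : ZMod p)⁻¹ * 2) * g i := by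
        ring
      rw [this, inv_mul_cancel₀ h2Z, one_mul]
    have hinj : ∀ x y : Fin (4 * k - 2) → ZMod p, x + x = y + y → x = y := by
      intro x y h
      funext i
      have h1 : x i + x i = y i + y i := congrFun h i
      have h2 : (2 : ZMod p) * x i = (2 : ZMod p) * y i := by
        rw [two_mul, two_mul]; exact h1
      exact mul_left_cancel₀ h2Z h2
    have hcount := lower_bound hhalf hinj hT hmax
    have hcardG : Fintype.card (Fin (4 * k - 2) → ZMod p) = p ^ (4 * k - 2) := by
      rw [Fintype.card_fun, ZMod.card, Fintype.card_fin]
    rw [hcardG] at hcount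
    have hTpos : 0 < T.card := by
      have : 0 < p ^ (4 * k - 2) := Nat.pow_pos hp.pos
      nlinarith
    -- pass to reals
    have hcR : (2 : ℝ) * (p : ℝ) ^ (4 * k - 2) < 3 * (T.card : ℝ) ^ 2 := by
      exact_mod_cast hcount
    have hPP : (p : ℝ) ^ (4 * k - 2) = ((p : ℝ) ^ (2 * k - 1)) ^ 2 := by
      rw [← pow_mul]
      congr 1
      omega
    set P : ℝ := (p : ℝ) ^ (2 * k - 1) with hPdef
    have hPnn : 0 ≤ P := pow_nonneg (Nat.cast_nonneg p) _
    have hkey : 2 / 3 * P ^ 2 < (T.card : ℝ) ^ 2 := by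
      rw [hPP] at hcR
      linarith
    have h1 : Real.sqrt (2 / 3) * P = Real.sqrt (2 / 3 * P ^ 2) := by
      rw [Real.sqrt_mul (by norm_num : (0:ℝ) ≤ 2/3), Real.sqrt_sq hPnn]
    rw [h1]
    calc Real.sqrt (2 / 3 * P ^ 2) < Real.sqrt ((T.card : ℝ) ^ 2) :=
          Real.sqrt_lt_sqrt (by positivity) hkey
    _ = (T.card : ℝ) := Real.sqrt_sq (Nat.cast_nonneg _)
end

section
/- Let G be a finite abelian group of odd order n > 5. Then there exists a set H ⊆ G such that for every x ∈ G \ H there exist distinct a,b ∈ H with 2x = a + b, and |H| ≤ sqrt((n−1)·ln(n−1)) + sqrt(n−1) + 1. -/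
open Finset
universe u


lemma exists_decomp : ∀ (n : ℕ) (G : Type u) [AddCommGroup G] [Fintype G],
    Fintype.card G = n → Odd n →
    ∃ (k : ℕ) (e : Fin k → ℕ) (g : Fin k → G),
      (∀ i, Odd (e i) ∧ 3 ≤ e i) ∧ (∏ i, e i) = n ∧
      ∀ x : G, ∃ r : Fin k → ℕ, (∀ i, r i < e i) ∧ x = ∑ i, r i • g i := by
  intro n
  induction n using Nat.strong_induction_on with
  | _ n ih =>
    intro G _ _ hcard hodd
    have hn0 : n ≠ 0 := by rintro rfl; exact (Fintype.card_ne_zero (α := G)) hcard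
    rcases eq_or_lt_of_le (Nat.one_le_iff_ne_zero.mpr hn0) with h1 | h1
    · -- n = 1
      refine ⟨0, ![], ![], by simp, by simpa using h1, fun x => ⟨![], by simp, ?_⟩⟩
      have hle : Fintype.card G ≤ 1 := by omega
      have := Fintype.card_le_one_iff.mp hle
      simpa using this x 0
    · -- n > 1
      obtain ⟨g, hg⟩ := Fintype.exists_ne_of_one_lt_card (by omega) (0 : G)
      set e₀ := addOrderOf g with he₀
      have he₀dvd : e₀ ∣ n := hcard ▸ addOrderOf_dvd_card
      have he₀odd : Odd e₀ := hodd.of_dvd_nat he₀dvd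
      have he₀1 : 1 < e₀ := by
        have hpos : 0 < e₀ := addOrderOf_pos g
        rcases Nat.lt_or_ge 1 e₀ with h | h
        · exact h
        · exfalso; apply hg
          have : e₀ = 1 := by omega
          exact (AddMonoid.addOrderOf_eq_one_iff).mp this
      have he₀3 : 3 ≤ e₀ := by
        rcases he₀odd with ⟨j, hj⟩; omega
      set H := AddSubgroup.zmultiples g with hH
      letI : Fintype (G ⧸ H) := Fintype.ofFinite _
      have hcardH : Nat.card H = e₀ := Nat.card_zmultiples g
      have hsplit : Nat.card G = Nat.card (G ⧸ H) * Nat.card H :=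
        AddSubgroup.card_eq_card_quotient_mul_card_addSubgroup H
      set nQ := Fintype.card (G ⧸ H) with hnQ
      have hnQcard : Nat.card (G ⧸ H) = nQ := Nat.card_eq_fintype_card
      have hmul : n = nQ * e₀ := by
        rw [← hcard, ← Nat.card_eq_fintype_card, hsplit, hnQcard, hcardH]
      have hnQpos : 0 < nQ := Fintype.card_pos
      have hnQlt : nQ < n := by nlinarith
      have hnQodd : Odd nQ := hodd.of_dvd_nat ⟨e₀, hmul⟩
      obtain ⟨k, e, gq, hprops, hprod, hexpr⟩ := ih nQ hnQlt (G ⧸ H) rfl hnQodd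
      refine ⟨k + 1, Fin.cons e₀ e, Fin.cons g (fun i => (gq i).out), ?_, ?_, ?_⟩
      · intro i
        refine Fin.cases ?_ ?_ i
        · simpa using ⟨he₀odd, he₀3⟩
        · intro j; simpa using hprops j
      · rw [Fin.prod_univ_succ]; simp only [Fin.cons_zero, Fin.cons_succ]
        rw [hprod, hmul]; ring
      · intro x
        obtain ⟨r, hr, hxr⟩ := hexpr (QuotientAddGroup.mk x)
        set s : G := ∑ i, r i • (gq i).out with hs
        have hπs : (QuotientAddGroup.mk s : G ⧸ H) = ∑ i, r i • gq i := by
          rw [hs]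
          rw [show (QuotientAddGroup.mk (∑ i, r i • (gq i).out) : G ⧸ H)
              = (QuotientAddGroup.mk' H) (∑ i, r i • (gq i).out) from rfl]
          rw [map_sum]
          refine Finset.sum_congr rfl fun i _ => ?_
          rw [map_nsmul]
          simp [QuotientAddGroup.mk'_apply, QuotientAddGroup.out_eq']
        have hmem : x - s ∈ H := by
          rw [← QuotientAddGroup.eq_zero_iff]
          have : (QuotientAddGroup.mk (x - s) : G ⧸ H)
              = QuotientAddGroup.mk x - QuotientAddGroup.mk s := by
            exact QuotientAddGroup.mk_sub _ _ _
          rw [this, hπs, ← hxr, sub_self]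
        obtain ⟨z, hz⟩ := AddSubgroup.mem_zmultiples_iff.mp hmem
        set r₀ : ℕ := (z % (e₀ : ℤ)).toNat with hr₀
        have he₀posZ : (0:ℤ) < (e₀ : ℤ) := by exact_mod_cast Nat.lt_of_lt_of_le Nat.zero_lt_one he₀1.le
        have hmodnn : 0 ≤ z % (e₀ : ℤ) := Int.emod_nonneg z (ne_of_gt he₀posZ)
        have hr₀lt : r₀ < e₀ := by
          have := Int.emod_lt_of_pos z he₀posZ
          omega
        have hge₀ : (e₀ : ℤ) • g = 0 := by
          have : e₀ • g = 0 := addOrderOf_nsmul_eq_zero g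
          simpa using this
        have hr₀g : r₀ • g = x - s := by
          have h1 : (r₀ : ℤ) • g = (z % (e₀:ℤ)) • g := by
            congr 1; omega
          have h2 : (z % (e₀:ℤ)) • g = z • g := by
            have : z % (e₀:ℤ) = z - (e₀:ℤ) * (z / (e₀:ℤ)) := by
              rw [Int.emod_def]
            rw [this, sub_smul, mul_comm, mul_smul, hge₀, smul_zero, sub_zero]
          have h3 : (r₀ : ℤ) • g = r₀ • g := natCast_zsmul g r₀
          rw [← hz, ← h2, ← h1, h3]
        refine ⟨Fin.cons r₀ r, ?_, ?_⟩
        · intro i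
          refine Fin.cases ?_ ?_ i
          · simpa using hr₀lt
          · intro j; simpa using hr j
        · rw [Fin.sum_univ_succ]
          simp only [Fin.cons_zero, Fin.cons_succ]
          rw [hr₀g, ← hs]
          abel

private lemma c1 (W n K : ℝ) (h : K * W = n) (h2 : n ≤ K * K) (h3 : 6 ≤ K) :
    K * 1 + W ≤ 2.5 * K := by nlinarith
private lemma c2a (P W n K : ℝ) (h0 : 0 < P) (hPK : P ≤ K) (h2a : 3 * K ≤ 4 * P)
    (hPW : P * W = n) (hn : n ≤ K * K) : P * 1 + W ≤ 2.5 * K := by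
  nlinarith [mul_nonneg (sub_nonneg.mpr hPK) (sub_nonneg.mpr h2a)]
private lemma c2b (P q R d K : ℝ) (hP : 0 < P) (hR : 1 ≤ R) (hd : 3 ≤ d) (hq0 : 0 ≤ q)
    (hq2 : 2 * q ≤ d + 1) (hK2P : K ≤ 2 * P) (h2b : 4 * P ≤ 3 * K)
    (hPW : P * (d * R) ≤ K * K) : P * 2 + q * R ≤ 2.5 * K := by
  have hRnn : (0:ℝ) ≤ R := by linarith
  have hqR1 : (2 * q) * R ≤ (d + 1) * R := mul_le_mul_of_nonneg_right hq2 hRnn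
  have hW3 : 3 * R ≤ d * R := by nlinarith
  have hqR : 6 * (q * R) ≤ 4 * (d * R) := by linarith
  have hA : 8 * (P * P) + 3 * (K * K) ≤ 10 * (K * P) := by
    nlinarith [mul_nonneg (sub_nonneg.mpr hK2P) (sub_nonneg.mpr h2b)]
  have hB : 6 * (P * (q * R)) ≤ 4 * (K * K) := by
    have h1 : P * (6 * (q * R)) ≤ P * (4 * (d * R)) :=
      mul_le_mul_of_nonneg_left hqR (le_of_lt hP)
    nlinarith
  nlinarith [hA, hB, hP, mul_pos hP hP]
private lemma c3c (P m0 q R K : ℝ) (hR : 0 ≤ R) (hq : q ≤ 2) (hq0 : 0 ≤ q) (hKpos : 0 < K)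
    (h1 : 2 * K * R ≤ K * K) (hM0K2 : P * m0 ≤ K + P - 1) (h2PK : 2 * P ≤ K - 1) :
    P * m0 + q * R ≤ 2.5 * K := by
  have hRK : 2 * R ≤ K := by nlinarith
  have hqR : q * R ≤ 2 * R := mul_le_mul_of_nonneg_right hq hR
  linarith
private lemma c3b (T R n K : ℝ) (hT : K < T) (hT2 : T ≤ 2 * K) (hTR : T * R = n)
    (hn : n ≤ K * K) (hR : 0 ≤ R) (hK : 0 < K) : T + 1 * R ≤ 2.5 * K := by
  nlinarith [mul_nonneg (sub_nonneg.mpr hT.le) (sub_nonneg.mpr hT2)]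
private lemma c3a (T q R K : ℝ) (hq0 : 0 ≤ q) (hR0 : 0 ≤ R) (hTK : K ≤ T) (hT15 : 2 * T ≤ 3 * K)
    (hbig : 2 * (q * R) * T ≤ 3 * (K * K)) (hT0 : 0 < T) : T + q * R ≤ 2.5 * K := by
  have h5 : 2 * (T * T) + 3 * (K * K) ≤ 5 * (K * T) := by
    nlinarith [mul_nonneg (sub_nonneg.mpr hTK) (sub_nonneg.mpr hT15)]
  nlinarith [h5, hbig, hT0]

lemma select (k : ℕ) (e : Fin k → ℕ) (he : ∀ i, 3 ≤ e i) (n : ℕ)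
    (hn : ∏ i, e i = n) (h33 : 33 ≤ n) :
    ∃ (S : Finset (Fin k)) (t : Fin k) (m : ℕ), t ∉ S ∧ 0 < m ∧
      (((∏ i ∈ S, e i) * m + ((e t + m - 1) / m) * (∏ i ∈ Sᶜ.erase t, e i) : ℕ) : ℝ)
        ≤ 2.5 * ((Nat.sqrt (n-1) : ℝ) + 1) := by
  classical
  obtain ⟨K, hKdef⟩ : ∃ K, K = Nat.sqrt (n-1) + 1 := ⟨_, rfl⟩
  have hK2 : n ≤ K * K := by
    have h := Nat.lt_succ_sqrt (n-1)
    have h2 : n - 1 < K * K := by rw [hKdef]; simpa [Nat.succ_eq_add_one] using h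
    omega
  have hK6 : 6 ≤ K := by
    have h32 : 5 ≤ Nat.sqrt (n-1) := Nat.le_sqrt.mpr (by omega)
    omega
  have hKn : K < n := by
    have := Nat.sqrt_lt_self (show 1 < n - 1 by omega)
    omega
  have hKRHS : 2.5 * ((Nat.sqrt (n-1) : ℝ) + 1) = 2.5 * (K:ℝ) := by
    rw [hKdef]; push_cast; ring
  set A := univ.powerset.filter (fun s : Finset (Fin k) => ∏ i ∈ s, e i ≤ K) with hA
  have hAne : A.Nonempty := ⟨∅, by simp [hA]; omega⟩
  obtain ⟨S, hSA, hSmax⟩ := Finset.exists_max_image A (fun s => ∏ i ∈ s, e i) hAne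
  have hSK : ∏ i ∈ S, e i ≤ K := (Finset.mem_filter.mp hSA).2
  have hScne : Sᶜ.Nonempty := by
    by_contra h
    rw [Finset.not_nonempty_iff_eq_empty, Finset.compl_eq_empty_iff] at h
    rw [h, hn] at hSK
    omega
  obtain ⟨t, ht⟩ := hScne
  have htS : t ∉ S := Finset.mem_compl.mp ht
  obtain ⟨P, hP⟩ : ∃ P, P = ∏ i ∈ S, e i := ⟨_, rfl⟩
  obtain ⟨d, hd⟩ : ∃ d, d = e t := ⟨_, rfl⟩
  obtain ⟨R, hR⟩ : ∃ R, R = ∏ i ∈ Sᶜ.erase t, e i := ⟨_, rfl⟩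
  rw [← hP] at hSK hSmax
  have hP1 : 1 ≤ P := hP ▸ Finset.one_le_prod' (fun i _ => by have := he i; omega)
  have hR1 : 1 ≤ R := hR ▸ Finset.one_le_prod' (fun i _ => by have := he i; omega)
  have hd3 : 3 ≤ d := hd ▸ he t
  have hPdR : P * (d * R) = n := by
    rw [hP, hd, hR, Finset.mul_prod_erase _ _ ht, Finset.prod_mul_prod_compl S e, hn]
  have hKPd : K < P * d := by
    by_contra h
    push_neg at h
    have hins : insert t S ∈ A := by
      rw [hA, Finset.mem_filter]
      refine ⟨Finset.mem_powerset.mpr (Finset.subset_univ _), ?_⟩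
      rw [Finset.prod_insert htS, ← hP, ← hd, mul_comm]
      exact h
    have hle := hSmax _ hins
    rw [Finset.prod_insert htS, ← hP, ← hd] at hle
    nlinarith
  obtain ⟨m0, hm0def⟩ : ∃ m0, m0 = (K + P - 1) / P := ⟨_, rfl⟩
  have hPpos : 0 < P := hP1
  have hm0a : P * m0 ≤ K + P - 1 := by
    rw [hm0def, Nat.mul_comm]; exact Nat.div_mul_le_self _ _
  have hm0b : K ≤ P * m0 := by
    have h := Nat.div_add_mod (K + P - 1) P
    rw [← hm0def] at h
    have h2 : (K + P - 1) % P < P := Nat.mod_lt _ hPpos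
    omega
  have hm0pos : 0 < m0 := by
    rcases Nat.eq_zero_or_pos m0 with h | h
    · rw [h, Nat.mul_zero] at hm0b; omega
    · exact h
  have hm0d : m0 ≤ d := by
    by_contra h
    push_neg at h
    have h1 : P * (d + 1) ≤ P * m0 := Nat.mul_le_mul_left _ (by omega)
    have h2 : P * (d+1) = P * d + P := by ring
    omega
  -- real facts
  have hP0 : (0:ℝ) < (P:ℝ) := by exact_mod_cast hPpos
  have hR0 : (1:ℝ) ≤ (R:ℝ) := by exact_mod_cast hR1
  have hD3 : (3:ℝ) ≤ (d:ℝ) := by exact_mod_cast hd3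
  have hPK : (P:ℝ) ≤ (K:ℝ) := by exact_mod_cast hSK
  have hNK : ((n:ℕ):ℝ) ≤ (K:ℝ) * (K:ℝ) := by exact_mod_cast hK2
  have hPDR : (P:ℝ) * ((d:ℝ) * (R:ℝ)) = (n:ℝ) := by exact_mod_cast hPdR
  have hKPD : (K:ℝ) < (P:ℝ) * (d:ℝ) := by exact_mod_cast hKPd
  have hK0 : (6:ℝ) ≤ (K:ℝ) := by exact_mod_cast hK6
  have hRnn : (0:ℝ) ≤ (R:ℝ) := by linarith
  have hKpos : (0:ℝ) < (K:ℝ) := by linarith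
  rcases Nat.lt_or_ge m0 2 with hc1 | hc2
  · -- Case 1 : m0 = 1, so P = K ; take m = 1
    have hm01 : m0 = 1 := by omega
    have hPKeq : P = K := by rw [hm01, Nat.mul_one] at hm0b; omega
    refine ⟨S, t, 1, htS, Nat.one_pos, ?_⟩
    rw [← hP, ← hd, ← hR, hKRHS]
    have hq : (d + 1 - 1) / 1 = d := by simp
    rw [hq]
    have hPKr : (P:ℝ) = (K:ℝ) := by exact_mod_cast hPKeq
    rw [hPKr] at hPDR
    calc ((P * 1 + d * R : ℕ):ℝ) = (K:ℝ) * 1 + (d:ℝ) * (R:ℝ) := by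
          rw [hPKeq]; push_cast; ring
    _ ≤ 2.5 * (K:ℝ) := c1 _ _ _ hPDR hNK hK0
  rcases Nat.lt_or_ge m0 3 with hc2' | hc3
  · -- Case 2 : m0 = 2
    have hm02 : m0 = 2 := by omega
    have hK2P : K ≤ 2 * P := by rw [hm02] at hm0b; omega
    have hK2Pr : (K:ℝ) ≤ 2 * (P:ℝ) := by exact_mod_cast hK2P
    rcases Nat.lt_or_ge (4 * P) (3 * K) with h2b | h2a
    · -- Case 2b : 4P < 3K ; m = 2
      refine ⟨S, t, 2, htS, by omega, ?_⟩
      rw [← hP, ← hd, ← hR, hKRHS]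
      obtain ⟨q, hqdef⟩ : ∃ q, q = (d + 2 - 1) / 2 := ⟨_, rfl⟩
      rw [← hqdef]
      have hq2 : 2 * q ≤ d + 1 := by
        have h1 : q * 2 ≤ d + 2 - 1 := hqdef ▸ Nat.div_mul_le_self _ _
        omega
      have h2br : 4 * (P:ℝ) ≤ 3 * (K:ℝ) := by exact_mod_cast h2b.le
      have hq2r : 2 * (q:ℝ) ≤ (d:ℝ) + 1 := by exact_mod_cast hq2
      have hPW : (P:ℝ) * ((d:ℝ) * (R:ℝ)) ≤ (K:ℝ) * (K:ℝ) := by rw [hPDR]; exact hNK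
      calc ((P * 2 + q * R : ℕ):ℝ) = (P:ℝ) * 2 + (q:ℝ) * (R:ℝ) := by push_cast; ring
      _ ≤ 2.5 * (K:ℝ) := c2b _ _ _ _ _ hP0 hR0 hD3 (Nat.cast_nonneg q) hq2r hK2Pr h2br hPW
    · -- Case 2a : 3K ≤ 4P ; m = 1
      refine ⟨S, t, 1, htS, Nat.one_pos, ?_⟩
      rw [← hP, ← hd, ← hR, hKRHS]
      have hq : (d + 1 - 1) / 1 = d := by simp
      rw [hq]
      have h2ar : 3 * (K:ℝ) ≤ 4 * (P:ℝ) := by exact_mod_cast h2a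
      calc ((P * 1 + d * R : ℕ):ℝ) = (P:ℝ) * 1 + (d:ℝ) * (R:ℝ) := by push_cast; ring
      _ ≤ 2.5 * (K:ℝ) := c2a _ _ _ _ hP0 hPK h2ar hPDR hNK
  · -- Case 3 : m0 ≥ 3
    have h2PK : 2 * P ≤ K - 1 := by
      have h1 : P * 3 ≤ K + P - 1 := le_trans (Nat.mul_le_mul_left _ hc3) hm0a
      omega
    have h2PKr : 2 * (P:ℝ) ≤ (K:ℝ) - 1 := by
      have h1 : ((2 * P : ℕ):ℝ) ≤ ((K - 1 : ℕ):ℝ) := by exact_mod_cast h2PK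
      push_cast [Nat.cast_sub (show 1 ≤ K by omega)] at h1
      linarith
    have hM0K : (K:ℝ) ≤ (P:ℝ) * (m0:ℝ) := by exact_mod_cast hm0b
    have hM0K2 : (P:ℝ) * (m0:ℝ) ≤ (K:ℝ) + (P:ℝ) - 1 := by
      have h1 : ((P * m0 : ℕ):ℝ) ≤ ((K + P - 1 : ℕ):ℝ) := by exact_mod_cast hm0a
      push_cast [Nat.cast_sub (show 1 ≤ K + P by omega)] at h1
      linarith
    rcases Nat.lt_or_ge d (2 * m0) with h3bc | h3a
    · rcases Nat.lt_or_ge (2 * K) (P * d) with h3c | h3b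
      · -- Case 3c : d < 2m0, P d > 2K ; m = m0, q ≤ 2
        refine ⟨S, t, m0, htS, hm0pos, ?_⟩
        rw [← hP, ← hd, ← hR, hKRHS]
        obtain ⟨q, hqdef⟩ : ∃ q, q = (d + m0 - 1) / m0 := ⟨_, rfl⟩
        rw [← hqdef]
        have hqle : q ≤ 2 := by
          have h1 : d + m0 - 1 < m0 * 3 := by omega
          have h2 := Nat.div_lt_of_lt_mul h1
          rw [← hqdef] at h2
          omega
        have hqler : (q:ℝ) ≤ 2 := by exact_mod_cast hqle
        have h3cr : 2 * (K:ℝ) ≤ (P:ℝ) * (d:ℝ) := by exact_mod_cast h3c.le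
        have h1 : 2 * (K:ℝ) * (R:ℝ) ≤ (K:ℝ) * (K:ℝ) := by
          have h1a : 2 * (K:ℝ) * (R:ℝ) ≤ ((P:ℝ) * (d:ℝ)) * (R:ℝ) :=
            mul_le_mul_of_nonneg_right h3cr hRnn
          have h1b : ((P:ℝ) * (d:ℝ)) * (R:ℝ) = (P:ℝ) * ((d:ℝ) * (R:ℝ)) := by ring
          rw [h1b, hPDR] at h1a
          linarith
        calc ((P * m0 + q * R : ℕ):ℝ) = (P:ℝ) * (m0:ℝ) + (q:ℝ) * (R:ℝ) := by push_cast; ring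
        _ ≤ 2.5 * (K:ℝ) := c3c _ _ _ _ _ hRnn hqler (Nat.cast_nonneg q) hKpos h1 hM0K2 h2PKr
      · -- Case 3b : d < 2m0, P d ≤ 2K ; m = d, q = 1
        refine ⟨S, t, d, htS, by omega, ?_⟩
        rw [← hP, ← hd, ← hR, hKRHS]
        have hq1 : (d + d - 1) / d = 1 := Nat.div_eq_of_lt_le (by omega) (by omega)
        rw [hq1]
        have h3br : (P:ℝ) * (d:ℝ) ≤ 2 * (K:ℝ) := by exact_mod_cast h3b
        have hTR : ((P:ℝ) * (d:ℝ)) * (R:ℝ) = ((n:ℕ):ℝ) := by rw [mul_assoc]; exact hPDR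
        calc ((P * d + 1 * R : ℕ):ℝ) = (P:ℝ) * (d:ℝ) + 1 * (R:ℝ) := by push_cast; ring
        _ ≤ 2.5 * (K:ℝ) := c3b _ _ _ _ hKPD h3br hTR hNK hRnn hKpos
    · -- Case 3a : 2 m0 ≤ d ; m = m0
      refine ⟨S, t, m0, htS, hm0pos, ?_⟩
      rw [← hP, ← hd, ← hR, hKRHS]
      obtain ⟨q, hqdef⟩ : ∃ q, q = (d + m0 - 1) / m0 := ⟨_, rfl⟩
      rw [← hqdef]
      have hqm : q * m0 ≤ d + m0 - 1 := hqdef ▸ Nat.div_mul_le_self _ _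
      have hq32 : 2 * (q * m0) ≤ 3 * d := by omega
      have hq32r : 2 * ((q:ℝ) * (m0:ℝ)) ≤ 3 * (d:ℝ) := by exact_mod_cast hq32
      have hM03 : (3:ℝ) ≤ (m0:ℝ) := by exact_mod_cast hc3
      have hbig : 2 * ((q:ℝ) * (R:ℝ)) * ((P:ℝ) * (m0:ℝ)) ≤ 3 * ((K:ℝ) * (K:ℝ)) := by
        have h2 : (2 * ((q:ℝ) * (m0:ℝ))) * ((R:ℝ) * (P:ℝ))
            ≤ (3 * (d:ℝ)) * ((R:ℝ) * (P:ℝ)) :=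
          mul_le_mul_of_nonneg_right hq32r (by positivity)
        have h4 : (P:ℝ) * ((d:ℝ) * (R:ℝ)) ≤ (K:ℝ) * (K:ℝ) := by rw [hPDR]; exact hNK
        linarith
      have hTpos : (0:ℝ) < (P:ℝ) * (m0:ℝ) :=
        mul_pos hP0 (lt_of_lt_of_le (by norm_num : (0:ℝ) < 3) hM03)
      have h2T3K : 2 * ((P:ℝ) * (m0:ℝ)) ≤ 3 * (K:ℝ) := by linarith
      calc ((P * m0 + q * R : ℕ):ℝ) = (P:ℝ) * (m0:ℝ) + (q:ℝ) * (R:ℝ) := by push_cast; ring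
      _ ≤ 2.5 * (K:ℝ) :=
        c3a _ _ _ _ (Nat.cast_nonneg q) hRnn hM0K h2T3K hbig hTpos

private lemma log_ge_of_exp_bound {c x : ℝ} (hx : 0 < x) (h : c ≤ Real.log x) : c ≤ Real.log x := h

-- log lower bounds
private lemma log32 : (3.4657 : ℝ) ≤ Real.log 32 := by
  have h2 : (0.6931471803 : ℝ) < Real.log 2 := Real.log_two_gt_d9
  have h32 : (32:ℝ) = 2^(5:ℕ) := by norm_num
  rw [h32, Real.log_pow]
  push_cast
  nlinarith

private lemma log6 : (1.7196 : ℝ) ≤ Real.log 6 := by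
  have h2 : (0.6931471803 : ℝ) < Real.log 2 := Real.log_two_gt_d9
  have h4 : Real.log 6 = Real.log 4 + Real.log (3/2) := by
    rw [← Real.log_mul (by norm_num) (by norm_num)]
    norm_num
  have h42 : Real.log 4 = 2 * Real.log 2 := by
    rw [show (4:ℝ) = 2^(2:ℕ) by norm_num, Real.log_pow]
    push_cast; ring
  have h32 : (1/3 : ℝ) ≤ Real.log (3/2) := by
    have := Real.log_le_sub_one_of_pos (show (0:ℝ) < 2/3 by norm_num)
    have hτ : Real.log (2/3) = - Real.log (3/2) := by
      rw [show (2/3 : ℝ) = (3/2)⁻¹ by norm_num, Real.log_inv]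
    nlinarith
  nlinarith

private lemma log22 : (3.0453 : ℝ) ≤ Real.log 22 := by
  have h2 : (0.6931471803 : ℝ) < Real.log 2 := Real.log_two_gt_d9
  have h4 : Real.log 22 = Real.log 16 + Real.log (11/8) := by
    rw [← Real.log_mul (by norm_num) (by norm_num)]
    norm_num
  have h42 : Real.log 16 = 4 * Real.log 2 := by
    rw [show (16:ℝ) = 2^(4:ℕ) by norm_num, Real.log_pow]
    push_cast; ring
  have h32 : (3/11 : ℝ) ≤ Real.log (11/8) := by
    have := Real.log_le_sub_one_of_pos (show (0:ℝ) < 8/11 by norm_num)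
    have hτ : Real.log (8/11) = - Real.log (11/8) := by
      rw [show (8/11 : ℝ) = (11/8)⁻¹ by norm_num, Real.log_inv]
    nlinarith
  nlinarith

private lemma log30 : (3.399 : ℝ) ≤ Real.log 30 := by
  have h1 := log32
  have h4 : Real.log 32 = Real.log 30 + Real.log (16/15) := by
    rw [← Real.log_mul (by norm_num) (by norm_num)]
    norm_num
  have h32 : Real.log (16/15) ≤ 1/15 := by
    have := Real.log_le_sub_one_of_pos (show (0:ℝ) < 16/15 by norm_num)
    nlinarith
  nlinarith

-- main numeric lemma for the construction range
private lemma numeric1 (n : ℕ) (h : 33 ≤ n) :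
    2.5 * ((Nat.sqrt (n-1) : ℝ) + 1) ≤
      Real.sqrt (((n:ℝ)-1) * Real.log ((n:ℝ)-1)) + Real.sqrt ((n:ℝ)-1) + 1 := by
  have hx0 : (32:ℝ) ≤ (n:ℝ) - 1 := by
    have : (33:ℝ) ≤ (n:ℝ) := by exact_mod_cast h
    linarith
  obtain ⟨x, hxdef⟩ : ∃ x:ℝ, (n:ℝ) - 1 = x := ⟨_, rfl⟩
  rw [hxdef] at hx0 ⊢
  have hx0' : (0:ℝ) ≤ x := by linarith
  obtain ⟨s, hs⟩ : ∃ s:ℝ, Real.sqrt x = s := ⟨_, rfl⟩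
  rw [hs]
  have hs0 : 0 ≤ s := hs ▸ Real.sqrt_nonneg x
  have hs2 : s^2 = x := hs ▸ Real.sq_sqrt hx0'
  have hs5 : 5.65 ≤ s := by
    rw [← hs, Real.le_sqrt (by norm_num) hx0']
    nlinarith
  have hNs : (Nat.sqrt (n-1) : ℝ) ≤ s := by
    rw [← hs, Real.le_sqrt (by positivity) hx0']
    have h1 : (Nat.sqrt (n-1))^2 ≤ n - 1 := Nat.sqrt_le' (n-1)
    have h2 : ((Nat.sqrt (n-1) : ℕ)^2 : ℝ) ≤ ((n-1 : ℕ) : ℝ) := by exact_mod_cast h1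
    have h3 : ((n-1:ℕ):ℝ) = x := by
      rw [← hxdef, Nat.cast_sub (by omega : 1 ≤ n)]; norm_num
    rw [h3] at h2
    exact_mod_cast h2
  have hlog : (3.4657:ℝ) ≤ Real.log x :=
    le_trans log32 (Real.log_le_log (by norm_num) hx0)
  obtain ⟨u, hudef⟩ : ∃ u:ℝ, Real.sqrt (Real.log x) = u := ⟨_, rfl⟩
  have hu : (1.8616 : ℝ) ≤ u := by
    rw [← hudef, Real.le_sqrt (by norm_num) (by linarith)]
    nlinarith
  have hsplit : Real.sqrt (x * Real.log x) = s * u := by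
    rw [← hs, ← hudef, ← Real.sqrt_mul hx0']
  rw [hsplit]
  have hu0 : 0 ≤ u := hudef ▸ Real.sqrt_nonneg _
  nlinarith [mul_le_mul_of_nonneg_left hu hs0]

-- numeric lemma for small n (pairing argument)
private lemma numeric2 (n : ℕ) (ho : Odd n) (h7 : 7 ≤ n) (h31 : n ≤ 31) :
    (((n+1)/2 : ℕ) : ℝ) ≤
      Real.sqrt (((n:ℝ)-1) * Real.log ((n:ℝ)-1)) + Real.sqrt ((n:ℝ)-1) + 1 := by
  obtain ⟨j, hj⟩ := ho
  have hhalf : (((n+1)/2 : ℕ) : ℝ) = ((n:ℝ)+1)/2 := by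
    have h1 : (n+1)/2 = j+1 := by omega
    have h2 : (n:ℝ) = 2*(j:ℝ)+1 := by exact_mod_cast congrArg (Nat.cast : ℕ → ℝ) hj
    rw [h1, h2]; push_cast; ring
  rw [hhalf]
  obtain ⟨x, hxdef⟩ : ∃ x:ℝ, (n:ℝ) - 1 = x := ⟨_, rfl⟩
  rw [hxdef]
  have hx6 : (6:ℝ) ≤ x := by
    have : (7:ℝ) ≤ (n:ℝ) := by exact_mod_cast h7
    rw [← hxdef]; linarith
  have hx0 : (0:ℝ) ≤ x := by linarith
  obtain ⟨s, hs⟩ : ∃ s:ℝ, Real.sqrt x = s := ⟨_, rfl⟩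
  have hs0 : 0 ≤ s := hs ▸ Real.sqrt_nonneg x
  have hs2 : s^2 = x := hs ▸ Real.sq_sqrt hx0
  obtain ⟨u, hu⟩ : ∃ u:ℝ, Real.sqrt (Real.log x) = u := ⟨_, rfl⟩
  have hu0 : 0 ≤ u := hu ▸ Real.sqrt_nonneg _
  have hsplit : Real.sqrt (x * Real.log x) = s * u := by
    rw [← hs, ← hu, ← Real.sqrt_mul hx0]
  rw [hsplit]
  have hgoal : ((n:ℝ)+1)/2 = (x+2)/2 := by rw [← hxdef]; ring
  rw [hgoal]
  rcases le_or_gt n 21 with hA | hA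
  · have hxle : x ≤ 20 := by
      have : (n:ℝ) ≤ 21 := by exact_mod_cast hA
      rw [← hxdef]; linarith
    have hlog : (1.7196:ℝ) ≤ Real.log x :=
      le_trans log6 (Real.log_le_log (by norm_num) hx6)
    have huge : (1.31:ℝ) ≤ u := by
      rw [← hu, Real.le_sqrt (by norm_num) (by linarith)]
      nlinarith
    have hsle : s ≤ 4.5 := by nlinarith
    nlinarith [mul_le_mul_of_nonneg_left huge hs0, mul_nonneg (by linarith : (0:ℝ) ≤ 4.5 - s) hs0]
  rcases le_or_gt n 29 with hB | hB
  · have hxge : (22:ℝ) ≤ x := by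
      have : (23:ℝ) ≤ (n:ℝ) := by exact_mod_cast (show 23 ≤ n by omega)
      rw [← hxdef]; linarith
    have hxle : x ≤ 28 := by
      have : (n:ℝ) ≤ 29 := by exact_mod_cast hB
      rw [← hxdef]; linarith
    have hlog : (3.0453:ℝ) ≤ Real.log x :=
      le_trans log22 (Real.log_le_log (by norm_num) hxge)
    have huge : (1.745:ℝ) ≤ u := by
      rw [← hu, Real.le_sqrt (by norm_num) (by linarith)]
      nlinarith
    have hsle : s ≤ 5.3 := by nlinarith
    nlinarith [mul_le_mul_of_nonneg_left huge hs0, mul_nonneg (by linarith : (0:ℝ) ≤ 5.3 - s) hs0]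
  · have hn31 : n = 31 := by omega
    have hx30 : x = 30 := by
      rw [← hxdef, hn31]; norm_num
    have hlog : (3.399:ℝ) ≤ Real.log x :=
      le_trans log30 (Real.log_le_log (by norm_num) (by rw [hx30]))
    have huge : (1.8436:ℝ) ≤ u := by
      rw [← hu, Real.le_sqrt (by norm_num) (by linarith)]
      nlinarith
    have hsge : (5.477:ℝ) ≤ s := by
      rw [← hs, Real.le_sqrt (by norm_num) hx0, hx30]; norm_num
    have h1 : (0:ℝ) ≤ s - 5.477 := by linarith
    have h2 : (0:ℝ) ≤ u - 1.8436 := by linarith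
    have hp : (0:ℝ) ≤ (s - 5.477) * (u - 1.8436) := mul_nonneg h1 h2
    have hx2 : (x+2)/2 = 16 := by rw [hx30]; norm_num
    rw [hx2]
    linarith [hp]


private lemma two_nsmul_inj {G : Type*} [AddCommGroup G] [Fintype G]
    (hodd : Odd (Fintype.card G)) {x y : G} (h : 2 • x = 2 • y) : x = y := by
  have h0 : 2 • (x - y) = 0 := by rw [smul_sub, h, sub_self]
  have hd : addOrderOf (x - y) ∣ 2 := addOrderOf_dvd_of_nsmul_eq_zero h0
  have hc : addOrderOf (x - y) ∣ Fintype.card G := addOrderOf_dvd_card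
  have h1 : addOrderOf (x - y) = 1 := by
    obtain ⟨j, hj⟩ := id hodd
    rcases (Nat.dvd_prime Nat.prime_two).mp hd with h' | h'
    · exact h'
    · exfalso; rw [h'] at hc; omega
  have h2 : x - y = 0 := AddMonoid.addOrderOf_eq_one_iff.mp h1
  have := sub_eq_zero.mp h2
  exact this

theorem stmt_13 {G : Type*} [AddCommGroup G] [Fintype G] [DecidableEq G]
    (hodd : Odd (Fintype.card G)) (hn : 5 < Fintype.card G) :
    ∃ H : Finset G,
      (∀ x : G, x ∉ H → ∃ a ∈ H, ∃ b ∈ H, a ≠ b ∧ (2 : ℤ) • x = a + b) ∧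
      (H.card : ℝ) ≤ Real.sqrt ((Fintype.card G - 1) * Real.log (Fintype.card G - 1)) +
        Real.sqrt (Fintype.card G - 1) + 1 := by
  classical
  set n := Fintype.card G with hncard
  have h7 : 7 ≤ n := by obtain ⟨j, hj⟩ := id hodd; omega
  have hz2 : ∀ z : G, (2:ℤ) • z = 2 • z := by
    intro z
    rw [two_zsmul, two_nsmul]
  by_cases hle : n ≤ 31
  · -- small case : any set of size (n+1)/2 works
    obtain ⟨j, hj⟩ := id hodd
    have hcard_half : (n+1)/2 ≤ (univ : Finset G).card := by
      rw [Finset.card_univ, ← hncard]; omega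
    obtain ⟨B, hBsub, hBcard⟩ := Finset.exists_subset_card_eq hcard_half
    refine ⟨B, ?_, ?_⟩
    · intro x hx
      obtain ⟨y, hy⟩ : ∃ y : G, y ∉ (Bᶜ ∪ Bᶜ.image (fun z => 2 • x - z)) := by
        by_contra hcon
        push_neg at hcon
        have hsub : (univ : Finset G) ⊆ Bᶜ ∪ Bᶜ.image (fun z => 2 • x - z) :=
          fun z _ => hcon z
        have hcard := Finset.card_le_card hsub
        rw [Finset.card_univ, ← hncard] at hcard
        have h1 := Finset.card_union_le (Bᶜ) (Bᶜ.image (fun z => 2 • x - z))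
        have h2 := Finset.card_image_le (s := Bᶜ) (f := fun z => 2 • x - z)
        have h3 : (Bᶜ).card = n - (n+1)/2 := by
          rw [Finset.card_compl, hBcard, ← hncard]
        omega
      rw [Finset.mem_union, not_or] at hy
      obtain ⟨hy1, hy2⟩ := hy
      have hyB : y ∈ B := by
        by_contra h
        exact hy1 (Finset.mem_compl.mpr h)
      have hfyB : (2 • x - y) ∈ B := by
        by_contra h
        apply hy2
        exact Finset.mem_image.mpr ⟨2 • x - y, Finset.mem_compl.mpr h, sub_sub_cancel _ _⟩
      refine ⟨y, hyB, 2 • x - y, hfyB, ?_, ?_⟩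
      · intro heq
        have h2 : 2 • y = 2 • x := by
          have h3 : y + y = 2 • x := eq_sub_iff_add_eq.mp heq
          rw [two_nsmul]; exact h3
        have h4 : y = x := two_nsmul_inj hodd h2
        exact hx (h4 ▸ hyB)
      · rw [hz2 x, add_sub_cancel]
    · rw [hBcard]
      exact numeric2 n hodd h7 hle
  · -- large case : n ≥ 33, explicit construction
    have h33 : 33 ≤ n := by obtain ⟨j, hj⟩ := id hodd; omega
    obtain ⟨k, e, g, hprops, hprod, hexpr⟩ := exists_decomp n G hncard.symm hodd
    obtain ⟨S, t, m, htS, hm, hcost⟩ := select k e (fun i => (hprops i).2) n hprod h33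
    have ht : t ∈ Sᶜ := Finset.mem_compl.mpr htS
    obtain ⟨q, hqdef⟩ : ∃ q, q = (e t + m - 1) / m := ⟨_, rfl⟩
    rw [← hqdef] at hcost
    obtain ⟨φ, hφ⟩ : ∃ φ : (Fin k → ℕ) → G, φ = fun r => ∑ i, r i • g i := ⟨_, rfl⟩
    obtain ⟨XS, hXS⟩ : ∃ XS : Fin k → Finset ℕ, XS = fun i =>
      if i ∈ S then Finset.range (e i) else if i = t then Finset.range m else {0} := ⟨_, rfl⟩
    obtain ⟨YS, hYS⟩ : ∃ YS : Fin k → Finset ℕ, YS = fun i =>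
      if i ∈ S then {0} else if i = t then (Finset.range q).image (fun j => m * j)
      else Finset.range (e i) := ⟨_, rfl⟩
    refine ⟨(Fintype.piFinset XS).image φ ∪ (Fintype.piFinset YS).image φ, ?_, ?_⟩
    · -- saturation property
      intro x hx
      obtain ⟨r, hr, hxr⟩ := hexpr (2 • x)
      obtain ⟨rA, hrA⟩ : ∃ rA : Fin k → ℕ, rA = fun i =>
        if i ∈ S then r i else if i = t then r t % m else 0 := ⟨_, rfl⟩
      obtain ⟨rB, hrB⟩ : ∃ rB : Fin k → ℕ, rB = fun i =>
        if i ∈ S then 0 else if i = t then m * (r t / m) else r i := ⟨_, rfl⟩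
      have haX : φ rA ∈ (Fintype.piFinset XS).image φ := by
        refine Finset.mem_image_of_mem φ ?_
        rw [Fintype.mem_piFinset]
        intro i
        by_cases hiS : i ∈ S
        · rw [hrA, hXS]; simp only [if_pos hiS]
          exact Finset.mem_range.mpr (hr i)
        · by_cases hit : i = t
          · rw [hrA, hXS]; simp only [if_neg hiS, if_pos hit]
            exact Finset.mem_range.mpr (Nat.mod_lt _ hm)
          · rw [hrA, hXS]; simp only [if_neg hiS, if_neg hit]
            exact Finset.mem_singleton_self 0
      have hbY : φ rB ∈ (Fintype.piFinset YS).image φ := by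
        refine Finset.mem_image_of_mem φ ?_
        rw [Fintype.mem_piFinset]
        intro i
        by_cases hiS : i ∈ S
        · rw [hrB, hYS]; simp only [if_pos hiS]
          exact Finset.mem_singleton_self 0
        · by_cases hit : i = t
          · rw [hrB, hYS]; simp only [if_neg hiS, if_pos hit]
            refine Finset.mem_image.mpr ⟨r t / m, Finset.mem_range.mpr ?_, rfl⟩
            -- r t / m < q
            have he1 : 1 ≤ e t := le_trans (by norm_num) ((hprops t).2)
            have hsplit : e t + m - 1 = (e t - 1) + m := by omega
            have hq2 : q = (e t - 1) / m + 1 := by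
              rw [hqdef, hsplit, Nat.add_div_right _ hm]
            have hrt : r t ≤ e t - 1 := by have := hr t; omega
            have := Nat.div_le_div_right (c := m) hrt
            omega
          · rw [hrB, hYS]; simp only [if_neg hiS, if_neg hit]
            exact Finset.mem_range.mpr (hr i)
      have hab : φ rA + φ rB = 2 • x := by
        have hpt : ∀ i, rA i • g i + rB i • g i = r i • g i := by
          intro i
          by_cases hiS : i ∈ S
          · rw [hrA, hrB]; simp only [if_pos hiS]
            rw [zero_smul, add_zero]
          · by_cases hit : i = t
            · rw [hrA, hrB, hit]
              simp only [if_neg htS, eq_self_iff_true, if_true]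
              rw [← add_nsmul, Nat.mod_add_div]
            · rw [hrA, hrB]; simp only [if_neg hiS, if_neg hit]
              rw [zero_smul, zero_add]
        calc φ rA + φ rB = ∑ i, rA i • g i + ∑ i, rB i • g i := by rw [hφ]
        _ = ∑ i, (rA i • g i + rB i • g i) := (Finset.sum_add_distrib).symm
        _ = ∑ i, r i • g i := Finset.sum_congr rfl (fun i _ => hpt i)
        _ = 2 • x := hxr.symm
      refine ⟨φ rA, Finset.mem_union_left _ haX, φ rB, Finset.mem_union_right _ hbY, ?_, ?_⟩
      · intro heq
        have h2 : 2 • (φ rA) = 2 • x := by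
          rw [two_nsmul]
          nth_rewrite 2 [heq]
          exact hab
        have h4 : φ rA = x := two_nsmul_inj hodd h2
        exact hx (h4 ▸ Finset.mem_union_left _ haX)
      · rw [hz2 x, ← hab]
    · -- cardinality bound
      have hXcard : ((Fintype.piFinset XS).image φ).card ≤ (∏ i ∈ S, e i) * m := by
        calc ((Fintype.piFinset XS).image φ).card ≤ (Fintype.piFinset XS).card :=
              Finset.card_image_le
        _ = ∏ i, (XS i).card := Fintype.card_piFinset XS
        _ = (∏ i ∈ S, (XS i).card) * (∏ i ∈ Sᶜ, (XS i).card) :=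
              (Finset.prod_mul_prod_compl S _).symm
        _ = (∏ i ∈ S, e i) * m := by
            congr 1
            · refine Finset.prod_congr rfl fun i hi => ?_
              rw [hXS]; simp only [if_pos hi]; exact Finset.card_range _
            · rw [← Finset.mul_prod_erase Sᶜ _ ht]
              have h1 : (XS t).card = m := by
                rw [hXS]; simp only [if_neg htS, eq_self_iff_true, if_true]
                exact Finset.card_range _
              have h2 : ∏ i ∈ Sᶜ.erase t, (XS i).card = 1 :=
                Finset.prod_eq_one fun i hi => by
                  have hit : i ≠ t := Finset.ne_of_mem_erase hi
                  have hiS : i ∉ S := Finset.mem_compl.mp (Finset.mem_of_mem_erase hi)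
                  rw [hXS]; simp only [if_neg hiS, if_neg hit]
                  rfl
              rw [h1, h2, mul_one]
      have hYcard : ((Fintype.piFinset YS).image φ).card ≤ q * (∏ i ∈ Sᶜ.erase t, e i) := by
        calc ((Fintype.piFinset YS).image φ).card ≤ (Fintype.piFinset YS).card :=
              Finset.card_image_le
        _ = ∏ i, (YS i).card := Fintype.card_piFinset YS
        _ = (∏ i ∈ S, (YS i).card) * (∏ i ∈ Sᶜ, (YS i).card) :=
              (Finset.prod_mul_prod_compl S _).symm
        _ = q * (∏ i ∈ Sᶜ.erase t, e i) := by
            have hS1 : ∏ i ∈ S, (YS i).card = 1 :=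
              Finset.prod_eq_one fun i hi => by
                rw [hYS]; simp only [if_pos hi]; rfl
            rw [hS1, one_mul, ← Finset.mul_prod_erase Sᶜ _ ht]
            congr 1
            · rw [hYS]; simp only [if_neg htS, eq_self_iff_true, if_true]
              rw [Finset.card_image_of_injective _ (fun a b hab => by
                exact Nat.eq_of_mul_eq_mul_left hm hab)]
              exact Finset.card_range _
            · refine Finset.prod_congr rfl fun i hi => ?_
              have hit : i ≠ t := Finset.ne_of_mem_erase hi
              have hiS : i ∉ S := Finset.mem_compl.mp (Finset.mem_of_mem_erase hi)
              rw [hYS]; simp only [if_neg hiS, if_neg hit]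
              exact Finset.card_range _
      have hcardle : (((Fintype.piFinset XS).image φ ∪ (Fintype.piFinset YS).image φ).card : ℝ)
          ≤ (((∏ i ∈ S, e i) * m + q * (∏ i ∈ Sᶜ.erase t, e i) : ℕ) : ℝ) := by
        have h1 := Finset.card_union_le ((Fintype.piFinset XS).image φ)
          ((Fintype.piFinset YS).image φ)
        have h2 : ((Fintype.piFinset XS).image φ ∪ (Fintype.piFinset YS).image φ).card
            ≤ (∏ i ∈ S, e i) * m + q * (∏ i ∈ Sᶜ.erase t, e i) := by omega
        exact_mod_cast h2
      calc (((Fintype.piFinset XS).image φ ∪ (Fintype.piFinset YS).image φ).card : ℝ)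
          ≤ (((∏ i ∈ S, e i) * m + q * (∏ i ∈ Sᶜ.erase t, e i) : ℕ) : ℝ) := hcardle
      _ ≤ 2.5 * ((Nat.sqrt (n-1) : ℝ) + 1) := hcost
      _ ≤ Real.sqrt (((n:ℝ)-1) * Real.log ((n:ℝ)-1)) + Real.sqrt ((n:ℝ)-1) + 1 :=
            numeric1 n h33
end

section
/- The set S = ⋃_{l≥1} H_l ⊆ Z, where H_l = {Σ_{i<l} v_i·4^i : v_i ∈ {2,3}}, is 3-AP free: there are no integers a < b < c in S with b − a = c − b. -/
/-- Membership in `S = ⋃_{l ≥ 1} H_l`, where `H_l` is the set of integers with exactly `l`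
base-4 digits, each digit in `{2,3}`. -/
def memS (x : ℤ) : Prop :=
  ∃ l : ℕ, 1 ≤ l ∧ ∃ v : Fin l → ℤ, (∀ i, v i = 2 ∨ v i = 3) ∧ x = ∑ i, v i * 4 ^ (i : ℕ)

lemma geom3 (l : ℕ) : 3 * ∑ i ∈ Finset.range l, (4:ℤ)^i = 4^l - 1 := by
  induction l with
  | zero => simp
  | succ n ih => rw [Finset.sum_range_succ, mul_add, ih, pow_succ]; ring

lemma sum_bounds {l : ℕ} {v : Fin l → ℤ} (hv : ∀ i, v i = 2 ∨ v i = 3) :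
    2 * ((4:ℤ)^l - 1) ≤ 3 * ∑ i, v i * 4 ^ (i : ℕ) ∧
    3 * ∑ i, v i * 4 ^ (i : ℕ) ≤ 3 * ((4:ℤ)^l - 1) := by
  have hT : ∑ i : Fin l, (4:ℤ)^(i:ℕ) = ∑ i ∈ Finset.range l, (4:ℤ)^i :=
    Fin.sum_univ_eq_sum_range _ l
  have hlow : ∑ i : Fin l, 2 * (4:ℤ)^(i:ℕ) ≤ ∑ i, v i * 4 ^ (i : ℕ) := by
    apply Finset.sum_le_sum
    intro i _
    rcases hv i with h | h <;> rw [h] <;> nlinarith [pow_pos (by norm_num : (0:ℤ) < 4) (i:ℕ)]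
  have hhigh : ∑ i, v i * 4 ^ (i : ℕ) ≤ ∑ i : Fin l, 3 * (4:ℤ)^(i:ℕ) := by
    apply Finset.sum_le_sum
    intro i _
    rcases hv i with h | h <;> rw [h] <;> nlinarith [pow_pos (by norm_num : (0:ℤ) < 4) (i:ℕ)]
  have h2 : ∑ i : Fin l, 2 * (4:ℤ)^(i:ℕ) = 2 * ∑ i ∈ Finset.range l, (4:ℤ)^i := by
    rw [← Finset.mul_sum, hT]
  have h3 : ∑ i : Fin l, 3 * (4:ℤ)^(i:ℕ) = 3 * ∑ i ∈ Finset.range l, (4:ℤ)^i := by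
    rw [← Finset.mul_sum, hT]
  have hg := geom3 l
  constructor
  · nlinarith [hlow, h2]
  · nlinarith [hhigh, h3]

lemma digit_zero : ∀ (n : ℕ) (d : Fin n → ℤ), (∀ i, -2 ≤ d i ∧ d i ≤ 2) →
    ∑ i, d i * 4^(i:ℕ) = 0 → ∀ i, d i = 0 := by
  intro n
  induction n with
  | zero => intro d _ _ i; exact i.elim0
  | succ n ih =>
    intro d hd hsum
    rw [Fin.sum_univ_succ] at hsum
    have h4 : ∑ i : Fin n, d i.succ * 4^((i.succ : Fin (n+1)) : ℕ)
        = 4 * ∑ i : Fin n, d i.succ * 4^(i:ℕ) := by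
      rw [Finset.mul_sum]
      apply Finset.sum_congr rfl
      intro i _
      rw [Fin.val_succ, pow_succ]
      ring
    rw [h4] at hsum
    simp only [Fin.val_zero, pow_zero, mul_one] at hsum
    have hb := hd 0
    have h0 : d 0 = 0 ∧ ∑ i : Fin n, d i.succ * 4^(i:ℕ) = 0 := by omega
    have hrest := ih (fun i => d i.succ) (fun i => hd i.succ) h0.2
    intro i
    refine Fin.cases h0.1 (fun j => hrest j) i

lemma mem_le {l l' : ℕ} {x y : ℤ} {v : Fin l → ℤ} {w : Fin l' → ℤ}
    (hv : ∀ i, v i = 2 ∨ v i = 3) (hw : ∀ i, w i = 2 ∨ w i = 3)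
    (hx : x = ∑ i, v i * 4 ^ (i : ℕ)) (hy : y = ∑ i, w i * 4 ^ (i : ℕ))
    (hxy : x < y) : l ≤ l' := by
  by_contra h
  push_neg at h
  have h1 := (sum_bounds hv).1
  have h2 := (sum_bounds hw).2
  rw [← hx] at h1
  rw [← hy] at h2
  have hp : (4:ℤ)^(l'+1) ≤ 4^l := pow_le_pow_right₀ (by norm_num) h
  rw [pow_succ] at hp
  have hpos : (0:ℤ) < 4^l' := pow_pos (by norm_num) l'
  nlinarith

theorem stmt_18 :
    ¬ ∃ a b c : ℤ, memS a ∧ memS b ∧ memS c ∧ a < b ∧ b < c ∧ b - a = c - b := by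
  rintro ⟨a, b, c, ⟨la, hla, va, hva, ha⟩, ⟨lb, hlb, vb, hvb, hb⟩,
    ⟨lc, hlc, vc, hvc, hc⟩, hab, hbc, heq⟩
  have hlab : la ≤ lb := mem_le hva hvb ha hb hab
  have hlbc : lb ≤ lc := mem_le hvb hvc hb hc hbc
  have hA := sum_bounds hva
  have hB := sum_bounds hvb
  have hC := sum_bounds hvc
  rw [← ha] at hA; rw [← hb] at hB; rw [← hc] at hC
  have hpa : (4:ℤ) ≤ 4^la := by
    calc (4:ℤ) = 4^1 := by norm_num
    _ ≤ 4^la := pow_le_pow_right₀ (by norm_num) hla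
  have hpb : (4:ℤ) ≤ 4^lb := by
    calc (4:ℤ) = 4^1 := by norm_num
    _ ≤ 4^lb := pow_le_pow_right₀ (by norm_num) hlb
  -- lb = lc
  have hlbc' : lb = lc := by
    by_contra h
    have hlt : lb + 1 ≤ lc := by omega
    have hp : (4:ℤ)^(lb+1) ≤ 4^lc := pow_le_pow_right₀ (by norm_num) hlt
    rw [pow_succ] at hp
    -- 3c ≥ 2(4^lc - 1) ≥ 8·4^lb - 2 ; 3b ≤ 3·4^lb - 3 ; 3a ≥ 2·4^la - 2 ≥ 6
    nlinarith [hA.1, hB.2, hC.1, hpa]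
  have hlab' : la = lb := by
    by_contra h
    have hlt : la + 1 ≤ lb := by omega
    have hp : (4:ℤ)^(la+1) ≤ 4^lb := pow_le_pow_right₀ (by norm_num) hlt
    rw [pow_succ] at hp
    subst hlbc'
    -- 3(b-a) ≥ 2·4^lb - 2 - 3·4^la + 3 ; 3(c-b) ≤ 4^lb - 1 ; 4·4^la ≤ 4^lb
    nlinarith [hA.2, hB.1, hC.2]
  subst hlbc'
  subst hlab'
  -- all lengths equal to la; digit argument
  set d : Fin la → ℤ := fun i => va i + vc i - 2 * vb i with hd
  have hdsum : ∑ i, d i * 4^(i:ℕ) = 0 := by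
    have : ∑ i, d i * 4^(i:ℕ) = (∑ i, va i * 4^(i:ℕ)) + (∑ i, vc i * 4^(i:ℕ))
        - 2 * ∑ i, vb i * 4^(i:ℕ) := by
      rw [Finset.mul_sum, ← Finset.sum_add_distrib, ← Finset.sum_sub_distrib]
      apply Finset.sum_congr rfl
      intro i _
      simp [hd]
      ring
    rw [this, ← ha, ← hb, ← hc]
    linarith
  have hdb : ∀ i, -2 ≤ d i ∧ d i ≤ 2 := by
    intro i
    rcases hva i with h1 | h1 <;> rcases hvb i with h2 | h2 <;>
      rcases hvc i with h3 | h3 <;> simp [hd, h1, h2, h3] <;> norm_num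
  have hz := digit_zero la d hdb hdsum
  have hac : a = c := by
    rw [ha, hc]
    apply Finset.sum_congr rfl
    intro i _
    have h := hz i
    simp only [hd] at h
    rcases hva i with h1 | h1 <;> rcases hvb i with h2 | h2 <;>
      rcases hvc i with h3 | h3 <;> rw [h1, h3] <;> omega
  omega
end

section
/- For n ≥ 1, the image of H_n = {Σ_{i<n} v_i·4^i : v_i ∈ {2,3}} in Z_{4^n} (identifying K_n = [(4^n−1)/3, (4/3)(4^n−1)] with Z_{4^n}) is a complete (2,−1)-avoiding set of size 2^n; hence a((2,−1), Z_{4^n}) ≤ 2^n = sqrt(4^n). -/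
/-- If `∑ e i * 4^i = 0` with all `|e i| ≤ 3`, then all `e i = 0`. -/
lemma aux_sum_digits_zero : ∀ (n : ℕ) (e : Fin n → ℤ), (∀ i, |e i| ≤ 3) →
    (∑ i, e i * 4 ^ (i : ℕ)) = 0 → ∀ i, e i = 0 := by
  intro n
  induction n with
  | zero => intro e _ _ i; exact i.elim0
  | succ m ih =>
    intro e he hsum
    rw [Fin.sum_univ_succ] at hsum
    have h4 : (∑ i : Fin m, e i.succ * 4 ^ ((i.succ : Fin (m+1)) : ℕ)) =
        4 * ∑ i : Fin m, e i.succ * 4 ^ (i : ℕ) := by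
      rw [Finset.mul_sum]
      refine Finset.sum_congr rfl fun i _ => ?_
      rw [Fin.val_succ, pow_succ]
      ring
    rw [h4] at hsum
    simp only [Fin.val_zero, pow_zero, mul_one] at hsum
    have h0 : e 0 = 0 := by
      have hd : (4 : ℤ) ∣ e 0 := ⟨-(∑ i : Fin m, e i.succ * 4 ^ (i : ℕ)), by linarith⟩
      have := he 0
      rw [abs_le] at this
      omega
    have hT : (∑ i : Fin m, e i.succ * 4 ^ (i : ℕ)) = 0 := by
      have : (4 : ℤ) * (∑ i : Fin m, e i.succ * 4 ^ (i : ℕ)) = 0 := by linarith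
      linarith
    intro i
    refine Fin.cases h0 (fun j => ?_) i
    exact ih (fun i => e i.succ) (fun i => he i.succ) hT j

lemma aux_key (n : ℕ) (e : Fin n → ℤ) (he : ∀ i, |e i| ≤ 3)
    (h : ((4 : ℤ) ^ n) ∣ ∑ i, e i * 4 ^ (i : ℕ)) : ∀ i, e i = 0 := by
  apply aux_sum_digits_zero n e he
  have hb : |∑ i, e i * 4 ^ (i : ℕ)| ≤ ∑ i : Fin n, 3 * 4 ^ (i : ℕ) := by
    refine (Finset.abs_sum_le_sum_abs _ _).trans ?_
    refine Finset.sum_le_sum fun i _ => ?_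
    rw [abs_mul, abs_pow]
    have : |(4:ℤ)| = 4 := by norm_num
    rw [this]
    exact mul_le_mul_of_nonneg_right (he i) (by positivity)
  have hg : (∑ i : Fin n, (3:ℤ) * 4 ^ (i : ℕ)) = 4 ^ n - 1 := by
    have := geom_sum_mul (4 : ℤ) n
    rw [Fin.sum_univ_eq_sum_range (fun i => (3:ℤ) * 4 ^ i), ← Finset.mul_sum]
    norm_num at this
    linarith
  refine Int.eq_zero_of_abs_lt_dvd h ?_
  rw [hg] at hb
  have : (0:ℤ) < 4 ^ n := by positivity
  omega

lemma aux_inj_mod (n : ℕ) (c d : Fin n → ℤ) (hcd : ∀ i, |c i - d i| ≤ 3)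
    (h : ((∑ i, c i * 4 ^ (i : ℕ) : ℤ) : ZMod (4 ^ n)) =
         ((∑ i, d i * 4 ^ (i : ℕ) : ℤ) : ZMod (4 ^ n))) :
    ∀ i, c i = d i := by
  have hd : ((4 : ℤ) ^ n) ∣ ∑ i, (c i - d i) * 4 ^ (i : ℕ) := by
    rw [ZMod.intCast_eq_intCast_iff] at h
    have := h.dvd
    have heq : (∑ i, (c i - d i) * 4 ^ (i : ℕ)) =
        -((∑ i, d i * 4 ^ (i : ℕ)) - (∑ i, c i * 4 ^ (i : ℕ))) := by
      rw [neg_sub, ← Finset.sum_sub_distrib]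
      refine Finset.sum_congr rfl fun i _ => by ring
    rw [heq]
    exact (dvd_neg.mpr (by exact_mod_cast this))
  intro i
  have := aux_key n (fun i => c i - d i) hcd hd i
  linarith

lemma aux_surj (n : ℕ) : Function.Surjective
    (fun c : Fin n → Fin 4 => ((∑ i, ((c i : ℤ) + 1) * 4 ^ (i : ℕ) : ℤ) : ZMod (4 ^ n))) := by
  haveI : NeZero (4 ^ n) := ⟨by positivity⟩
  have hinj : Function.Injective
      (fun c : Fin n → Fin 4 => ((∑ i, ((c i : ℤ) + 1) * 4 ^ (i : ℕ) : ℤ) : ZMod (4 ^ n))) := by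
    intro c d h
    funext i
    have h3 : ∀ i, |((c i : ℤ) + 1) - ((d i : ℤ) + 1)| ≤ 3 := by
      intro i
      have hc := (c i).isLt
      have hd := (d i).isLt
      rw [abs_le]
      constructor <;> omega
    have h5 := aux_inj_mod n (fun i => (c i : ℤ) + 1) (fun i => (d i : ℤ) + 1) h3 h i
    have h6 : ((c i : ℕ) : ℤ) = ((d i : ℕ) : ℤ) := by exact_mod_cast (by linarith : ((c i : ℤ)) = (d i : ℤ))
    exact Fin.ext (by exact_mod_cast h6)
  have hcard : Fintype.card (Fin n → Fin 4) = Fintype.card (ZMod (4 ^ n)) := by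
    simp [ZMod.card]
  exact ((Fintype.bijective_iff_injective_and_card _).mpr ⟨hinj, hcard⟩).2

theorem stmt_19 (n : ℕ) (hn : 1 ≤ n) :
    let S : Set (ZMod (4 ^ n)) := {x | ∃ v : Fin n → ℤ, (∀ i, v i = 2 ∨ v i = 3) ∧
      x = ((∑ i, v i * 4 ^ (i : ℕ) : ℤ) : ZMod (4 ^ n))}
    (¬ ∃ a ∈ S, ∃ a' ∈ S, ∃ a'' ∈ S, a ≠ a' ∧ a' ≠ a'' ∧ a ≠ a'' ∧ a = 2 * a' - a'') ∧
    (∀ x : ZMod (4 ^ n), x ∉ S → ∃ a ∈ S, ∃ a' ∈ S, a ≠ a' ∧ x = 2 * a - a') ∧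
    S.ncard = 2 ^ n := by
  intro S
  haveI : NeZero (4 ^ n) := ⟨by positivity⟩
  refine ⟨?_, ?_, ?_⟩
  · -- avoiding
    rintro ⟨a, ⟨v, hv, rfl⟩, a', ⟨u, hu, rfl⟩, a'', ⟨w, hw, rfl⟩, hne1, hne2, hne3, heq⟩
    have h2 : ((∑ i, (v i + w i) * 4 ^ (i : ℕ) : ℤ) : ZMod (4 ^ n)) =
        ((∑ i, (2 * u i) * 4 ^ (i : ℕ) : ℤ) : ZMod (4 ^ n)) := by
      have e1 : (∑ i, (v i + w i) * 4 ^ (i : ℕ)) =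
          (∑ i, v i * 4 ^ (i : ℕ)) + (∑ i, w i * 4 ^ (i : ℕ)) := by
        rw [← Finset.sum_add_distrib]
        exact Finset.sum_congr rfl fun i _ => by ring
      have e2 : (∑ i, (2 * u i) * 4 ^ (i : ℕ)) = 2 * (∑ i, u i * 4 ^ (i : ℕ)) := by
        rw [Finset.mul_sum]
        exact Finset.sum_congr rfl fun i _ => by ring
      rw [e1, e2, Int.cast_add, Int.cast_mul]
      rw [heq]
      push_cast
      ring
    have hbound : ∀ i, |(v i + w i) - (2 * u i)| ≤ 3 := by
      intro i
      refine abs_le.mpr ?_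
      rcases hv i with h1 | h1 <;> rcases hu i with h2 | h2 <;> rcases hw i with h3 | h3 <;>
        rw [h1, h2, h3] <;> constructor <;> norm_num
    have hvw := aux_inj_mod n (fun i => v i + w i) (fun i => 2 * u i) hbound h2
    have heq2 : ∀ i, v i = w i := by
      intro i
      have := hvw i
      rcases hv i with h1 | h1 <;> rcases hu i with h2 | h2 <;> rcases hw i with h3 | h3 <;>
        omega
    exact hne3 (by rw [Finset.sum_congr rfl (fun i _ => by rw [heq2 i])])
  · -- complete
    intro x hx
    obtain ⟨c, hc⟩ := aux_surj n x
    simp only at hc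
    set u : Fin n → ℤ := fun i => if (c i : ℕ) < 2 then 2 else 3 with hu_def
    set w : Fin n → ℤ := fun i => 2 * u i - ((c i : ℤ) + 1) with hw_def
    have hu2 : ∀ i, u i = 2 ∨ u i = 3 := by
      intro i
      by_cases h : (c i : ℕ) < 2 <;> simp [hu_def, h] <;> omega
    have hw2 : ∀ i, w i = 2 ∨ w i = 3 := by
      intro i
      have := (c i).isLt
      by_cases h : (c i : ℕ) < 2 <;> simp only [hw_def, hu_def, h, if_true, if_false] <;> omega
    refine ⟨_, ⟨u, hu2, rfl⟩, _, ⟨w, hw2, rfl⟩, ?_, ?_⟩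
    · -- a ≠ a'
      intro hcon
      have huw := aux_inj_mod n u w (fun i => by
        rcases hu2 i with h1 | h1 <;> rcases hw2 i with h2 | h2 <;> rw [h1, h2] <;> norm_num) hcon
      apply hx
      refine ⟨u, hu2, ?_⟩
      rw [← hc]
      congr 1
      refine Finset.sum_congr rfl fun i _ => ?_
      have h1 := huw i
      simp only [hw_def] at h1
      have : ((c i : ℤ) + 1) = u i := by linarith
      rw [this]
    · -- x = 2a - a'
      rw [← hc]
      have e1 : (∑ i, ((c i : ℤ) + 1) * 4 ^ (i : ℕ)) =
          2 * (∑ i, u i * 4 ^ (i : ℕ)) - (∑ i, w i * 4 ^ (i : ℕ)) := by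
        rw [Finset.mul_sum, ← Finset.sum_sub_distrib]
        refine Finset.sum_congr rfl fun i _ => ?_
        simp only [hw_def]
        ring
      rw [e1]
      push_cast
      ring
  · -- ncard
    have hg : Function.Injective
        (fun w : Fin n → Fin 2 => ((∑ i, ((w i : ℤ) + 2) * 4 ^ (i : ℕ) : ℤ) : ZMod (4 ^ n))) := by
      intro a b h
      funext i
      have h3 : ∀ i, |((a i : ℤ) + 2) - ((b i : ℤ) + 2)| ≤ 3 := by
        intro i
        have ha := (a i).isLt
        have hb := (b i).isLt
        rw [abs_le]
        constructor <;> omega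
      have h5 := aux_inj_mod n (fun i => (a i : ℤ) + 2) (fun i => (b i : ℤ) + 2) h3 h i
      have h6 : ((a i : ℕ) : ℤ) = ((b i : ℕ) : ℤ) := by exact_mod_cast (by linarith : ((a i : ℤ)) = (b i : ℤ))
      exact Fin.ext (by exact_mod_cast h6)
    have hS : S = Set.range
        (fun w : Fin n → Fin 2 => ((∑ i, ((w i : ℤ) + 2) * 4 ^ (i : ℕ) : ℤ) : ZMod (4 ^ n))) := by
      ext x
      constructor
      · rintro ⟨v, hv, rfl⟩
        refine ⟨fun i => if v i = 2 then 0 else 1, ?_⟩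
        simp only
        congr 1
        refine Finset.sum_congr rfl fun i _ => ?_
        rcases hv i with h | h <;> simp [h]
      · rintro ⟨w, rfl⟩
        refine ⟨fun i => (w i : ℤ) + 2, fun i => ?_, rfl⟩
        show ((w i : ℤ) + 2 = 2 ∨ (w i : ℤ) + 2 = 3)
        have := (w i).isLt
        omega
    rw [hS, ← Nat.card_coe_set_eq, Nat.card_range_of_injective hg,
      Nat.card_eq_fintype_card]
    simp
end
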